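/- arXiv:2412.06856 — 8 statements merged into one kernel-verified Lean document; each statement's English description precedes it below -/
import Mathlib

section
/- Let α be a partition of n with diagonal sequence δ(α) = (d_k)_{k≥1}. If d_k ≥ d_{k+1} for some k ≥ 1, then d_{k+1} ≥ d_{k+2}. -/
/-- The `i`-th part (1-indexed) of a partition given as a list of parts; `0` beyond the end. -/
def part (α : List ℕ) (i : ℕ) : ℕ := α.getD (i - 1) 0

/-- `α` is a partition of `n`: a nonincreasing list of positive integers summing to `n`. -/
def IsPartition (n : ℕ) (α : List ℕ) : Prop :=
  α.Pairwise (· ≥ ·) ∧ (∀ x ∈ α, 0 < x) ∧ α.sum = n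

/-- The `k`-th entry of the diagonal sequence of `α`:
`d_k = |{i : 1 ≤ i ≤ k and α_i + i - 1 ≥ k}|`. -/
def diag (α : List ℕ) (k : ℕ) : ℕ :=
  ((Finset.Icc 1 k).filter (fun i => k ≤ part α i + i - 1)).card

lemma getD_anti (α : List ℕ) (hs : α.Pairwise (· ≥ ·)) {i j : ℕ} (hij : i ≤ j) :
    α.getD j 0 ≤ α.getD i 0 := by
  rcases lt_or_ge j α.length with hj | hj
  · have hi : i < α.length := lt_of_le_of_lt hij hj
    rw [show α.getD j 0 = α.get ⟨j, hj⟩ by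
        simp [List.getD_eq_getElem?_getD, List.getElem?_eq_getElem hj],
      show α.getD i 0 = α.get ⟨i, hi⟩ by
        simp [List.getD_eq_getElem?_getD, List.getElem?_eq_getElem hi]]
    exact hs.rel_get_of_le (by exact hij)
  · rw [List.getD_eq_default _ _ hj]
    exact Nat.zero_le _

lemma part_anti (α : List ℕ) (hs : α.Pairwise (· ≥ ·)) {i j : ℕ} (hij : i ≤ j) :
    part α j ≤ part α i :=
  getD_anti α hs (Nat.sub_le_sub_right hij 1)

lemma exists_step (f : ℕ → ℕ) (hstep : ∀ j, f (j + 1) ≤ f j + 1) (c : ℕ) :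
    ∀ b a, a ≤ b → f a ≤ c → c < f b → ∃ j, a < j ∧ j ≤ b ∧ f j = c + 1 := by
  intro b
  induction b with
  | zero => intro a ha hfa hfb; interval_cases a; omega
  | succ b ih =>
    intro a ha hfa hfb
    by_cases hc : c < f b
    · have hab : a ≤ b := by
        rcases Nat.lt_or_ge a (b + 1) with h' | h'
        · omega
        · exfalso; have : a = b + 1 := by omega
          subst this; omega
      obtain ⟨j, h1, h2, h3⟩ := ih a hab hfa hc
      exact ⟨j, h1, le_trans h2 (Nat.le_succ b), h3⟩
    · push_neg at hc
      have hs := hstep b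
      have haN : a ≠ b + 1 := by intro h'; subst h'; omega
      exact ⟨b + 1, by omega, le_refl _, by omega⟩

/-- Lemma 1(2): if `d_k ≥ d_{k+1}` then `d_{k+1} ≥ d_{k+2}`. -/
theorem diag_antitone_of_step (n : ℕ) (α : List ℕ) (hα : IsPartition n α)
    (k : ℕ) (hk : 1 ≤ k) (h : diag α (k + 1) ≤ diag α k) :
    diag α (k + 2) ≤ diag α (k + 1) := by
  obtain ⟨hsort, hpos, hsum⟩ := hα
  set S : ℕ → Finset ℕ :=
    fun m => (Finset.Icc 1 m).filter (fun i => m ≤ part α i + i - 1) with hS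
  have hd : ∀ m, diag α m = (S m).card := fun m => rfl
  have hmem : ∀ m i : ℕ, i ∈ S m ↔ 1 ≤ i ∧ i ≤ m ∧ m + 1 ≤ part α i + i := by
    intro m i
    simp only [hS, Finset.mem_filter, Finset.mem_Icc]
    omega
  by_contra hcon
  push_neg at hcon
  -- S (k+2) ⊆ insert (k+2) (S (k+1))
  have hss : S (k + 2) ⊆ insert (k + 2) (S (k + 1)) := by
    intro i hi
    rw [hmem] at hi
    rw [Finset.mem_insert, hmem]
    omega
  have hcins : (insert (k + 2) (S (k + 1))).card ≤ (S (k + 1)).card + 1 :=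
    Finset.card_insert_le _ _
  have heq : insert (k + 2) (S (k + 1)) = S (k + 2) := by
    refine (Finset.eq_of_subset_of_card_le hss ?_).symm
    rw [hd, hd] at hcon
    omega
  have hk2 : k + 2 ∈ S (k + 2) := heq ▸ Finset.mem_insert_self _ _
  rw [hmem] at hk2
  have hpos2 : 1 ≤ part α (k + 2) := by omega
  have hsub12 : S (k + 1) ⊆ S (k + 2) := by
    intro i hi
    exact heq ▸ Finset.mem_insert_of_mem hi
  have hpos1 : 1 ≤ part α (k + 1) :=
    le_trans hpos2 (part_anti α hsort (by omega))
  have hk1 : k + 1 ∈ S (k + 1) := by rw [hmem]; omega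
  have hk1' := hsub12 hk1
  rw [hmem] at hk1'
  -- there is i ∈ S k \ S (k+1)
  have h5 : ¬ S k ⊆ S (k + 1) := by
    intro hsub
    have hins : insert (k + 1) (S k) ⊆ S (k + 1) := by
      intro i hi
      rcases Finset.mem_insert.mp hi with rfl | hi
      · exact hk1
      · exact hsub hi
    have hc := Finset.card_le_card hins
    have hnm : k + 1 ∉ S k := by rw [hmem]; omega
    rw [Finset.card_insert_of_notMem hnm] at hc
    rw [hd, hd] at h
    omega
  obtain ⟨i, hiS, hiN⟩ := Finset.not_subset.mp h5
  rw [hmem] at hiS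
  rw [hmem] at hiN
  have hfi : part α i + i = k + 1 := by omega
  -- walk from i to k+1
  have hstep : ∀ j, part α (j + 1) + (j + 1) ≤ part α j + j + 1 := by
    intro j
    have : part α (j + 1) ≤ part α j := part_anti α hsort (by omega)
    omega
  obtain ⟨j, hj1, hj2, hj3⟩ :=
    exists_step (fun j => part α j + j) hstep (k + 1) (k + 1) i (by omega)
      (by show part α i + i ≤ k + 1; omega) (by show k + 1 < part α (k + 1) + (k + 1); omega)
  have hjS : j ∈ S (k + 1) := by rw [hmem]; omega
  have := hsub12 hjS
  rw [hmem] at this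
  omega
end

section
/- Let q ≥ 1 and s_1,…,s_q ≥ 0 be integers such that q(q+1)/2 + Σ_{k=1}^{q} k·s_k = n, and define ᾱ_i = q − i + 1 + Σ_{k=i}^{q} s_k for 1 ≤ i ≤ q. Then ᾱ = (ᾱ_1,…,ᾱ_q) is a partition of n, its parts are strictly decreasing (ᾱ_1 > ᾱ_2 > … > ᾱ_q), and its diagonal sequence is δ(ᾱ) = (1, 2, …, q−1, q, q^{(s_q)}, (q−1)^{(s_{q−1})}, …, 1^{(s_1)}). -/
/-- The sequence `(1, 2, …, q-1, q, q^{(s_q)}, (q-1)^{(s_{q-1})}, …, 1^{(s_1)})` as a list,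
where `s i` is the multiplicity of the entry `i` in the tail. -/
def stairSeq (q : ℕ) (s : ℕ → ℕ) : List ℕ :=
  (List.range q).map (· + 1) ++
    (List.range q).reverse.flatMap fun j => List.replicate (s (j + 1)) (j + 1)

/-- `ᾱ_i = q - i + 1 + ∑_{k=i}^{q} s_k`. -/
def abar (q : ℕ) (s : ℕ → ℕ) (i : ℕ) : ℕ := q - i + 1 + ∑ k ∈ Finset.Icc i q, s k

/-- The list `ᾱ = (ᾱ_1, …, ᾱ_q)`. -/
def abarList (q : ℕ) (s : ℕ → ℕ) : List ℕ := (List.range q).map fun j => abar q s (j + 1)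

/-- The tail of the stair sequence. -/
def tailSeq (q : ℕ) (s : ℕ → ℕ) : List ℕ :=
  (List.range q).reverse.flatMap fun j => List.replicate (s (j + 1)) (j + 1)

lemma abarList_length (q : ℕ) (s : ℕ → ℕ) : (abarList q s).length = q := by
  simp [abarList]

lemma part_abarList (q : ℕ) (s : ℕ → ℕ) {i : ℕ} (h1 : 1 ≤ i) (h2 : i ≤ q) :
    part (abarList q s) i = abar q s i := by
  unfold part abarList
  rw [List.getD_eq_getElem _ _ (by simp; omega)]
  simp only [List.getElem_map, List.getElem_range]
  congr 1
  omega

lemma part_abarList_zero (q : ℕ) (s : ℕ → ℕ) {i : ℕ} (h : q < i) :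
    part (abarList q s) i = 0 := by
  unfold part
  apply List.getD_eq_default
  rw [abarList_length]
  omega

lemma abar_lt (q : ℕ) (s : ℕ → ℕ) {i j : ℕ} (h2 : i < j) (h3 : j ≤ q) :
    abar q s j < abar q s i := by
  unfold abar
  have hsub : Finset.Icc j q ⊆ Finset.Icc i q := Finset.Icc_subset_Icc_left (le_of_lt h2)
  have := Finset.sum_le_sum_of_subset (f := s) hsub
  omega

lemma abarList_sorted_gt (q : ℕ) (s : ℕ → ℕ) : (abarList q s).Pairwise (· > ·) := by
  unfold abarList
  rw [List.pairwise_map]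
  refine (List.pairwise_lt_range (n := q)).imp_of_mem ?_
  intro a b ha hb hab
  exact abar_lt q s (by omega) (by simp at hb; omega)

lemma gauss (q : ℕ) : (∑ j ∈ Finset.range q, (q - j)) * 2 = q * (q + 1) := by
  induction q with
  | zero => simp
  | succ q ih =>
    rw [Finset.sum_range_succ]
    have h1 : ∑ j ∈ Finset.range q, (q + 1 - j) = (∑ j ∈ Finset.range q, (q - j)) + q := by
      rw [Finset.sum_congr rfl (fun j hj => by
        have := Finset.mem_range.mp hj
        show q + 1 - j = (q - j) + 1
        omega), Finset.sum_add_distrib, Finset.sum_const, Finset.card_range, smul_eq_mul,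
        mul_one]
    rw [h1]
    have h2 : q + 1 - q = 1 := by omega
    rw [h2]
    nlinarith [ih]

lemma swap_sum (q : ℕ) (s : ℕ → ℕ) :
    ∑ j ∈ Finset.range q, ∑ k ∈ Finset.Icc (j + 1) q, s k =
      ∑ k ∈ Finset.Icc 1 q, k * s k := by
  rw [Finset.sum_comm' (t' := Finset.Icc 1 q) (s' := fun k => Finset.range k)
    (by intro j k; simp only [Finset.mem_range, Finset.mem_Icc]; omega)]
  refine Finset.sum_congr rfl fun k _ => ?_
  simp [Finset.sum_const, Finset.card_range, mul_comm]

lemma abarList_sum (q : ℕ) (s : ℕ → ℕ) :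
    (abarList q s).sum = q * (q + 1) / 2 + ∑ k ∈ Finset.Icc 1 q, k * s k := by
  have h0 : ∀ (f : ℕ → ℕ) (n : ℕ), ((List.range n).map f).sum = ∑ i ∈ Finset.range n, f i := by
    intro f n
    induction n with
    | zero => simp
    | succ n ih => rw [List.range_succ, Finset.sum_range_succ, ← ih]; simp
  have h0 := h0 (fun j => abar q s (j + 1)) q
  rw [abarList, h0]
  unfold abar
  rw [Finset.sum_add_distrib, swap_sum]
  have h1 : ∑ j ∈ Finset.range q, (q - (j + 1) + 1) = ∑ j ∈ Finset.range q, (q - j) := by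
    refine Finset.sum_congr rfl fun j hj => ?_
    have := Finset.mem_range.mp hj
    omega
  have h2 := gauss q
  rw [h1]
  omega

lemma tail_getD (q : ℕ) (s : ℕ → ℕ) (m : ℕ) :
    (tailSeq q s).getD m 0 =
      ((Finset.Icc 1 q).filter fun i => m < ∑ k ∈ Finset.Icc i q, s k).card := by
  induction q generalizing m with
  | zero => simp [tailSeq]
  | succ q ih =>
    have hsplit : tailSeq (q + 1) s =
        List.replicate (s (q + 1)) (q + 1) ++ tailSeq q s := by
      simp [tailSeq, List.range_succ]
    rw [hsplit]
    by_cases hm : m < s (q + 1)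
    · rw [List.getD_append _ _ _ _ (by simpa using hm)]
      rw [List.getD_eq_getElem _ _ (by simpa using hm), List.getElem_replicate]
      rw [Finset.filter_true_of_mem ?_]
      · simp
      · intro i hi
        rw [Finset.mem_Icc] at hi
        have hmem : q + 1 ∈ Finset.Icc i (q + 1) := Finset.mem_Icc.mpr ⟨hi.2, le_refl _⟩
        have := Finset.single_le_sum (f := s) (fun _ _ => Nat.zero_le _) hmem
        omega
    · rw [List.getD_append_right _ _ _ _ (by simp; omega)]
      simp only [List.length_replicate]
      rw [ih]
      congr 1
      ext i
      simp only [Finset.mem_filter, Finset.mem_Icc]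
      by_cases hi : i ≤ q
      · have hA : ∑ k ∈ Finset.Icc i (q + 1), s k =
            (∑ k ∈ Finset.Icc i q, s k) + s (q + 1) :=
          Finset.sum_Icc_succ_top (by omega) s
        rw [hA]
        omega
      · constructor
        · rintro ⟨⟨h1, h2⟩, h3⟩
          omega
        · rintro ⟨⟨h1, h2⟩, h3⟩
          have hieq : i = q + 1 := by omega
          subst hieq
          rw [Finset.Icc_self, Finset.sum_singleton] at h3
          omega

lemma stair_getD_lt (q : ℕ) (s : ℕ → ℕ) {k : ℕ} (hk : k < q) :
    (stairSeq q s).getD k 0 = k + 1 := by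
  unfold stairSeq
  rw [List.getD_append _ _ _ _ (by simpa using hk)]
  rw [List.getD_eq_getElem _ _ (by simpa using hk)]
  simp

lemma stair_getD_ge (q : ℕ) (s : ℕ → ℕ) {k : ℕ} (hk : q ≤ k) :
    (stairSeq q s).getD k 0 = (tailSeq q s).getD (k - q) 0 := by
  unfold stairSeq
  rw [List.getD_append_right _ _ _ _ (by simpa using hk)]
  simp [tailSeq]

/-- Proposition 3, parts (1)–(3): `ᾱ` is a partition of `n`, its parts are strictly
decreasing, and its diagonal sequence is `(1, 2, …, q, q^{(s_q)}, …, 1^{(s_1)})`. -/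
theorem abar_isPartition_strictDesc_diag (n q : ℕ) (hq : 1 ≤ q) (s : ℕ → ℕ)
    (hsum : q * (q + 1) / 2 + ∑ k ∈ Finset.Icc 1 q, k * s k = n) :
    IsPartition n (abarList q s) ∧
      (abarList q s).Pairwise (· > ·) ∧
      (∀ k, 1 ≤ k → diag (abarList q s) k = (stairSeq q s).getD (k - 1) 0) := by
  have hsorted := abarList_sorted_gt q s
  refine ⟨⟨hsorted.imp fun h => le_of_lt h, ?_, by rw [abarList_sum]; exact hsum⟩,
    hsorted, ?_⟩
  · intro x hx
    simp only [abarList, List.mem_map, List.mem_range] at hx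
    obtain ⟨j, _, rfl⟩ := hx
    unfold abar
    omega
  · intro k hk
    by_cases hkq : k ≤ q
    · rw [stair_getD_lt q s (by omega)]
      unfold diag
      rw [Finset.filter_true_of_mem ?_]
      · rw [Nat.card_Icc]; omega
      · intro i hi
        rw [Finset.mem_Icc] at hi
        rw [part_abarList q s hi.1 (by omega)]
        unfold abar
        omega
    · rw [stair_getD_ge q s (by omega), tail_getD]
      unfold diag
      congr 1
      ext i
      simp only [Finset.mem_filter, Finset.mem_Icc]
      constructor
      · rintro ⟨⟨h1, h2⟩, h3⟩
        by_cases hi : i ≤ q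
        · rw [part_abarList q s h1 hi] at h3
          unfold abar at h3
          refine ⟨⟨h1, hi⟩, ?_⟩
          omega
        · rw [part_abarList_zero q s (by omega)] at h3
          omega
      · rintro ⟨⟨h1, h2⟩, h3⟩
        refine ⟨⟨h1, by omega⟩, ?_⟩
        rw [part_abarList q s h1 h2]
        unfold abar
        omega
end

section
/- For every positive integer n, the number of distinct diagonal sequences of partitions of n, i.e. |Δ(n)| where Δ(n) = {δ(α) : α a partition of n}, equals the number of partitions of n into distinct parts. -/
open Finset

/-- Number of "full" diagonals of a diagonal sequence. -/
def dr (n : ℕ) (f : ℕ → ℕ) : ℕ := ((Finset.Icc 1 n).filter fun k => f k = k).card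

/-- Reconstruction of the canonical (distinct-parts) partition from a diagonal sequence. -/
def recon (n : ℕ) (f : ℕ → ℕ) : List ℕ :=
  (List.range (dr n f)).map fun j =>
    (dr n f - j) + ((Finset.Icc (dr n f + 1) n).filter fun k => j + 1 ≤ f k).card

lemma part_le_part {α : List ℕ} (hs : α.Pairwise (· ≥ ·)) {i j : ℕ} (hi : 1 ≤ i) (hij : i ≤ j) :
    part α j ≤ part α i := by
  unfold part
  rcases lt_or_ge (j - 1) α.length with hj | hj
  · have hi' : i - 1 < α.length := lt_of_le_of_lt (by omega) hj
    rw [List.getD_eq_getElem _ _ hj, List.getD_eq_getElem _ _ hi']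
    rcases eq_or_lt_of_le hij with rfl | hlt
    · exact le_refl _
    · exact List.Pairwise.rel_get_of_lt hs (by simp; omega)
  · rw [List.getD_eq_default _ _ hj]
    exact Nat.zero_le _

lemma part_pos {α : List ℕ} (hp : ∀ x ∈ α, 0 < x) {i : ℕ} (hi : 1 ≤ i) (hl : i ≤ α.length) :
    0 < part α i := by
  unfold part
  have h : i - 1 < α.length := by omega
  rw [List.getD_eq_getElem _ _ h]
  exact hp _ (List.getElem_mem h)

lemma part_eq_zero {α : List ℕ} {i : ℕ} (hl : α.length < i) : part α i = 0 := by
  unfold part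
  exact List.getD_eq_default _ _ (by omega)

lemma getD_add_le_sum {α : List ℕ} (hp : ∀ x ∈ α, 0 < x) :
    ∀ j, j < α.length → α.getD j 0 + j ≤ α.sum := by
  induction α with
  | nil => intro j hj; simp at hj
  | cons a t ih =>
    intro j hj
    cases j with
    | zero => simp
    | succ m =>
      have ha : 0 < a := hp a (by simp)
      have := ih (fun x hx => hp x (by simp [hx])) m (by simpa using hj)
      simp only [List.getD_cons_succ, List.sum_cons]
      omega

lemma part_add_le_sum {α : List ℕ} (hp : ∀ x ∈ α, 0 < x) {i : ℕ} (hi : 1 ≤ i)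
    (hl : i ≤ α.length) : part α i + (i - 1) ≤ α.sum :=
  getD_add_le_sum hp (i - 1) (by omega)

lemma diag_restrict (α : List ℕ) (k : ℕ) :
    diag α k = ((Finset.Icc 1 (min k α.length)).filter (fun i => k ≤ part α i + i - 1)).card := by
  unfold _root_.diag
  congr 1
  apply Finset.ext
  intro i
  simp only [Finset.mem_filter, Finset.mem_Icc, le_min_iff, min_le_iff]
  constructor
  · rintro ⟨⟨h1, h2⟩, h3⟩
    refine ⟨⟨h1, h2, ?_⟩, h3⟩
    by_contra hcon
    push_neg at hcon
    have := part_eq_zero (α := α) (i := i) hcon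
    omega
  · rintro ⟨⟨h1, h2⟩, h3⟩
    exact ⟨⟨h1, by omega⟩, h3⟩

lemma length_le_sum {α : List ℕ} (hp : ∀ x ∈ α, 0 < x) : α.length ≤ α.sum := by
  induction α with
  | nil => simp
  | cons a t ih =>
    have := hp a (by simp)
    have := ih (fun x hx => hp x (by simp [hx]))
    simp only [List.length_cons, List.sum_cons]
    omega

lemma diag_eq_zero_of_gt {n : ℕ} {α : List ℕ} (hα : IsPartition n α) {k : ℕ} (hk : n < k) :
    diag α k = 0 := by
  obtain ⟨hs, hp, hsum⟩ := hα
  rw [diag_restrict, Finset.card_eq_zero, Finset.filter_eq_empty_iff]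
  intro i hi
  simp only [Finset.mem_Icc, le_min_iff] at hi
  have hb := part_add_le_sum hp hi.1 hi.2.2
  omega

lemma sum_diag {n : ℕ} {α : List ℕ} (hα : IsPartition n α) :
    ∑ k ∈ Icc 1 n, diag α k = n := by
  obtain ⟨hs, hp, hsum⟩ := hα
  have hlen : α.length ≤ n := hsum ▸ length_le_sum hp
  have h1 : ∀ k ∈ Icc 1 n, diag α k =
      ((Finset.Icc 1 n).filter (fun i => i ≤ k ∧ i ≤ α.length ∧ k ≤ part α i + i - 1)).card := by
    intro k hk
    simp only [Finset.mem_Icc] at hk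
    rw [diag_restrict]
    congr 1
    apply Finset.ext
    intro i
    simp only [Finset.mem_filter, Finset.mem_Icc, le_min_iff]
    constructor
    · rintro ⟨⟨g1, g2, g3⟩, g4⟩; exact ⟨⟨g1, le_trans g3 hlen⟩, g2, g3, g4⟩
    · rintro ⟨⟨g1, g2⟩, g3, g4, g5⟩; exact ⟨⟨g1, g3, g4⟩, g5⟩
  rw [Finset.sum_congr rfl h1]
  simp only [Finset.card_filter]
  rw [Finset.sum_comm]
  have h2 : ∀ i ∈ Icc 1 n,
      (∑ k ∈ Icc 1 n, if i ≤ k ∧ i ≤ α.length ∧ k ≤ part α i + i - 1 then 1 else 0) = part α i := by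
    intro i hi
    simp only [Finset.mem_Icc] at hi
    rcases le_or_gt i α.length with hil | hil
    · have hpos := part_pos hp hi.1 hil
      have hble := part_add_le_sum hp hi.1 hil
      rw [← Finset.card_filter]
      have heq : (Finset.Icc 1 n).filter (fun k => i ≤ k ∧ i ≤ α.length ∧ k ≤ part α i + i - 1)
          = Finset.Icc i (part α i + i - 1) := by
        apply Finset.ext
        intro k
        simp only [Finset.mem_filter, Finset.mem_Icc]
        constructor
        · rintro ⟨⟨g1, g2⟩, g3, g4, g5⟩; exact ⟨g3, g5⟩
        · rintro ⟨g1, g2⟩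
          have : α.sum = n := hsum
          constructor
          · constructor
            · omega
            · omega
          · exact ⟨g1, hil, g2⟩
      rw [heq, Nat.card_Icc]
      omega
    · have hz : part α i = 0 := part_eq_zero hil
      rw [hz]
      apply Finset.sum_eq_zero
      intro k hk
      simp only [Finset.mem_Icc] at hk
      have : ¬(i ≤ k ∧ i ≤ α.length ∧ k ≤ 0 + i - 1) := by
        rintro ⟨g1, g2, g3⟩; omega
      simp only [hz, this, if_false]
  rw [Finset.sum_congr rfl h2]
  have h4 : ∀ (l : List ℕ), ∑ j ∈ Finset.range l.length, l.getD j 0 = l.sum := by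
    intro l
    induction l with
    | nil => simp
    | cons a t ih =>
      rw [List.length_cons, Finset.sum_range_succ']
      simp only [List.getD_cons_succ, List.getD_cons_zero, List.sum_cons]
      rw [ih]
      omega
  have h3 : ∑ i ∈ Icc 1 n, part α i = α.sum := by
    rw [← Finset.Ico_add_one_right_eq_Icc, Finset.sum_Ico_eq_sum_range]
    have : ∀ j ∈ Finset.range (n + 1 - 1), part α (1 + j) = α.getD j 0 := by
      intro j hj
      unfold part
      congr 1
      omega
    rw [Finset.sum_congr rfl this]
    rw [← h4 α]
    symm
    apply Finset.sum_subset
    · apply Finset.range_subset_range.2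
      omega
    · intro x hx hnx
      simp only [Finset.mem_range, not_lt] at hx hnx
      exact List.getD_eq_default _ _ hnx
  rw [h3, hsum]

lemma diag_le (α : List ℕ) (k : ℕ) : diag α k ≤ k := by
  unfold _root_.diag
  have h := Finset.card_filter_le (Finset.Icc 1 k) (fun i => k ≤ part α i + i - 1)
  rw [Nat.card_Icc] at h
  omega

lemma diag_eq_self_iff (α : List ℕ) {k : ℕ} (hk : 1 ≤ k) :
    diag α k = k ↔ ∀ i ∈ Icc 1 k, k ≤ part α i + i - 1 := by
  unfold _root_.diag
  constructor
  · intro h i hi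
    have hcard : (Finset.Icc 1 k).card ≤ ((Finset.Icc 1 k).filter (fun i => k ≤ part α i + i - 1)).card := by
      rw [h, Nat.card_Icc]; omega
    have heq := Finset.eq_of_subset_of_card_le (Finset.filter_subset _ _) hcard
    rw [← heq] at hi
    exact (Finset.mem_filter.1 hi).2
  · intro h
    rw [Finset.filter_true_of_mem h, Nat.card_Icc]
    omega

lemma diag_succ_le_add_one (α : List ℕ) (k : ℕ) : diag α (k + 1) ≤ diag α k + 1 := by
  unfold _root_.diag
  have h : (Finset.Icc 1 (k+1)).filter (fun i => k + 1 ≤ part α i + i - 1) ⊆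
      insert (k+1) ((Finset.Icc 1 k).filter (fun i => k ≤ part α i + i - 1)) := by
    intro i hi
    simp only [Finset.mem_filter, Finset.mem_Icc] at hi
    rcases eq_or_lt_of_le hi.1.2 with rfl | hlt
    · exact Finset.mem_insert_self _ _
    · apply Finset.mem_insert_of_mem
      simp only [Finset.mem_filter, Finset.mem_Icc]
      exact ⟨⟨hi.1.1, by omega⟩, by omega⟩
  calc _ ≤ _ := Finset.card_le_card h
    _ ≤ _ := Finset.card_insert_le _ _

lemma diag_succ_le {α : List ℕ} (hs : α.Pairwise (· ≥ ·)) {k : ℕ} (hk : 1 ≤ k)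
    (hne : diag α k ≠ k) : diag α (k + 1) ≤ diag α k := by
  by_contra hcon
  push_neg at hcon
  set S1 : Finset ℕ := (Finset.Icc 1 (k+1)).filter (fun i => k + 1 ≤ part α i + i - 1) with hS1
  set S0 : Finset ℕ := (Finset.Icc 1 k).filter (fun i => k ≤ part α i + i - 1) with hS0
  have hd1 : diag α (k+1) = S1.card := rfl
  have hd0 : diag α k = S0.card := rfl
  have hsub : S1.erase (k+1) ⊆ S0 := by
    intro i hi
    simp only [hS1, Finset.mem_erase, Finset.mem_filter, Finset.mem_Icc] at hi
    simp only [hS0, Finset.mem_filter, Finset.mem_Icc]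
    exact ⟨⟨hi.2.1.1, by omega⟩, by omega⟩
  have hmem : (k+1) ∈ S1 := by
    by_contra hmem
    have hss : S1 ⊆ S0 := by
      intro i hi
      exact hsub (Finset.mem_erase.2 ⟨fun h => hmem (h ▸ hi), hi⟩)
    have := Finset.card_le_card hss
    omega
  have hpk1 : 1 ≤ part α (k+1) := by
    simp only [hS1, Finset.mem_filter, Finset.mem_Icc] at hmem
    omega
  have hnohit : ∀ i ∈ Finset.Icc 1 k, part α i + i - 1 ≠ k := by
    intro i hi hhit
    simp only [Finset.mem_Icc] at hi
    have hiS0 : i ∈ S0 := by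
      simp only [hS0, Finset.mem_filter, Finset.mem_Icc]
      exact ⟨hi, by omega⟩
    have hS1sub : S1 ⊆ insert (k+1) S0 := by
      intro j hj
      rcases eq_or_ne j (k+1) with rfl | hne'
      · exact Finset.mem_insert_self _ _
      · exact Finset.mem_insert_of_mem (hsub (Finset.mem_erase.2 ⟨hne', hj⟩))
    have hcard : S1.card ≤ (insert (k+1) S0).card := Finset.card_le_card hS1sub
    have hcard2 : (insert (k+1) S0).card ≤ S0.card + 1 := Finset.card_insert_le _ _
    have hSeq : S1 = insert (k+1) S0 := Finset.eq_of_subset_of_card_le hS1sub (by omega)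
    have hiS1 : i ∈ S1 := hSeq ▸ Finset.mem_insert_of_mem hiS0
    simp only [hS1, Finset.mem_filter, Finset.mem_Icc] at hiS1
    omega
  -- now show diag α k = k by discrete IVT, contradicting hne
  apply hne
  rw [diag_eq_self_iff α hk]
  intro i hi
  simp only [Finset.mem_Icc] at hi
  by_contra hlow
  push_neg at hlow
  have hβk : k ≤ part α k + k - 1 := by
    have : part α (k+1) ≤ part α k := part_le_part hs hk (by omega)
    omega
  -- discrete IVT
  set M : Finset ℕ := (Finset.Icc i k).filter (fun m => k ≤ part α m + m - 1) with hM
  have hMne : M.Nonempty := ⟨k, by simp only [hM, Finset.mem_filter, Finset.mem_Icc]; exact ⟨⟨hi.2, le_refl k⟩, hβk⟩⟩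
  obtain ⟨m, hmM, hmin⟩ : ∃ m ∈ M, ∀ x ∈ M, m ≤ x :=
    ⟨M.min' hMne, Finset.min'_mem _ _, fun x hx => Finset.min'_le _ _ hx⟩
  simp only [hM, Finset.mem_filter, Finset.mem_Icc] at hmM
  have hmi : i < m := by
    rcases eq_or_lt_of_le hmM.1.1 with rfl | h
    · omega
    · exact h
  have hm1 : m - 1 ∉ M := by
    intro hcon'
    have := hmin _ hcon'
    omega
  have hm1lt : part α (m-1) + (m-1) - 1 < k := by
    by_contra hge
    push_neg at hge
    exact hm1 (by simp only [hM, Finset.mem_filter, Finset.mem_Icc]; exact ⟨⟨by omega, by omega⟩, hge⟩)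
  have hstep : part α m ≤ part α (m-1) := part_le_part hs (by omega) (by omega)
  have : part α m + m - 1 = k := by omega
  exact hnohit m (by simp only [Finset.mem_Icc]; omega) this

lemma downward_closed_eq_Icc {S : Finset ℕ} {n : ℕ} (hS : S ⊆ Icc 1 n)
    (hdc : ∀ k ∈ S, ∀ j, 1 ≤ j → j ≤ k → j ∈ S) : S = Icc 1 S.card := by
  rcases S.eq_empty_or_nonempty with rfl | hne
  · simp
  · have hM : Icc 1 (S.max' hne) = S := by
      apply Finset.Subset.antisymm
      · intro j hj
        simp only [Finset.mem_Icc] at hj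
        exact hdc _ (S.max'_mem hne) j hj.1 hj.2
      · intro k hk
        simp only [Finset.mem_Icc]
        have := hS hk
        simp only [Finset.mem_Icc] at this
        exact ⟨this.1, S.le_max' k hk⟩
    rw [← hM, Nat.card_Icc]
    simp

lemma diag_one {n : ℕ} {α : List ℕ} (hα : IsPartition n α) (hn : 0 < n) : diag α 1 = 1 := by
  obtain ⟨hs, hp, hsum⟩ := hα
  rw [diag_eq_self_iff α le_rfl]
  intro i hi
  simp only [Finset.mem_Icc] at hi
  have hi1 : i = 1 := by omega
  subst hi1
  have hlen : 1 ≤ α.length := by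
    rcases α with _ | ⟨a, t⟩
    · simp at hsum; omega
    · simp
  have := part_pos hp le_rfl hlen
  omega

lemma filter_diag_eq_Icc {n : ℕ} {α : List ℕ} (hα : IsPartition n α) :
    ((Finset.Icc 1 n).filter fun k => diag α k = k) = Icc 1 (dr n (diag α)) := by
  apply downward_closed_eq_Icc (Finset.filter_subset _ _)
  intro k hk j hj1 hjk
  simp only [Finset.mem_filter, Finset.mem_Icc] at hk ⊢
  refine ⟨⟨hj1, le_trans hjk hk.1.2⟩, ?_⟩
  rw [diag_eq_self_iff α hj1]
  intro i hi
  simp only [Finset.mem_Icc] at hi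
  have := (diag_eq_self_iff α (le_trans hj1 hjk)).1 hk.2 i
    (by simp only [Finset.mem_Icc]; omega)
  omega

lemma dr_pos {n : ℕ} {α : List ℕ} (hα : IsPartition n α) (hn : 0 < n) : 1 ≤ dr n (diag α) := by
  have h1 : (1 : ℕ) ∈ (Finset.Icc 1 n).filter fun k => diag α k = k := by
    simp only [Finset.mem_filter, Finset.mem_Icc]
    exact ⟨⟨le_rfl, hn⟩, diag_one hα hn⟩
  exact Finset.card_pos.2 ⟨1, h1⟩

lemma dr_le (n : ℕ) (f : ℕ → ℕ) : dr n f ≤ n := by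
  unfold dr
  have := Finset.card_filter_le (Finset.Icc 1 n) (fun k => f k = k)
  rw [Nat.card_Icc] at this
  omega

lemma diag_full_iff {n : ℕ} {α : List ℕ} (hα : IsPartition n α) {k : ℕ}
    (hk1 : 1 ≤ k) (hkn : k ≤ n) : (diag α k = k ↔ k ≤ dr n (diag α)) := by
  constructor
  · intro h
    have : k ∈ (Finset.Icc 1 n).filter fun k => diag α k = k := by
      simp only [Finset.mem_filter, Finset.mem_Icc]
      exact ⟨⟨hk1, hkn⟩, h⟩
    rw [filter_diag_eq_Icc hα] at this
    simp only [Finset.mem_Icc] at this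
    exact this.2
  · intro h
    have : k ∈ Icc 1 (dr n (diag α)) := by simp only [Finset.mem_Icc]; exact ⟨hk1, h⟩
    rw [← filter_diag_eq_Icc hα] at this
    exact (Finset.mem_filter.1 this).2

lemma diag_succ_le_of_dr_le {n : ℕ} {α : List ℕ} (hα : IsPartition n α) (hn : 0 < n) {k : ℕ}
    (hk : dr n (diag α) ≤ k) : diag α (k + 1) ≤ diag α k := by
  have hr1 : 1 ≤ dr n (diag α) := dr_pos hα hn
  rcases lt_or_ge n k with hnk | hkn
  · rw [diag_eq_zero_of_gt hα (by omega : n < k + 1)]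
    exact Nat.zero_le _
  · rcases eq_or_ne (diag α k) k with he | hne
    · have hkr : k ≤ dr n (diag α) := (diag_full_iff hα (by omega) hkn).1 he
      have hkeq : k = dr n (diag α) := le_antisymm hkr hk
      rcases lt_or_ge n (k+1) with h1 | h1
      · rw [diag_eq_zero_of_gt hα h1]; exact Nat.zero_le _
      · have hne1 : diag α (k+1) ≠ k + 1 := by
          intro hcon
          have := (diag_full_iff hα (by omega) h1).1 hcon
          omega
        have := diag_le α (k+1)
        rw [he]
        omega
    · exact diag_succ_le hα.1 (by omega) hne

lemma diag_antitoneOn {n : ℕ} {α : List ℕ} (hα : IsPartition n α) (hn : 0 < n) {k k' : ℕ}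
    (hk : dr n (diag α) ≤ k) (hkk' : k ≤ k') : diag α k' ≤ diag α k := by
  induction k' , hkk' using Nat.le_induction with
  | base => exact le_rfl
  | succ m hm ih => exact le_trans (diag_succ_le_of_dr_le hα hn (by omega)) ih

lemma diag_dr {n : ℕ} {α : List ℕ} (hα : IsPartition n α) (hn : 0 < n) :
    diag α (dr n (diag α)) = dr n (diag α) :=
  (diag_full_iff hα (dr_pos hα hn) (dr_le n (diag α))).2 le_rfl

lemma diag_le_dr {n : ℕ} {α : List ℕ} (hα : IsPartition n α) (hn : 0 < n) {k : ℕ}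
    (hk : dr n (diag α) ≤ k) : diag α k ≤ dr n (diag α) := by
  calc diag α k ≤ diag α (dr n (diag α)) := diag_antitoneOn hα hn le_rfl hk
    _ = _ := diag_dr hα hn

lemma part_strict {α : List ℕ} (hd : α.Pairwise (· > ·)) {i j : ℕ} (hi : 1 ≤ i) (hij : i ≤ j)
    (hj : j ≤ α.length) : part α j + (j - i) ≤ part α i := by
  induction j, hij using Nat.le_induction with
  | base => simp
  | succ m hm ih =>
    have hml : m ≤ α.length := by omega
    have hconsec : part α (m+1) < part α m := by
      unfold part
      have h1 : m - 1 < α.length := by omega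
      have h2 : m + 1 - 1 < α.length := by omega
      rw [List.getD_eq_getElem _ _ h1, List.getD_eq_getElem _ _ h2]
      exact List.Pairwise.rel_get_of_lt hd (by simp; omega)
    have := ih hml
    omega

lemma part_distinct_lb {α : List ℕ} (hd : α.Pairwise (· > ·)) (hp : ∀ x ∈ α, 0 < x) {i : ℕ}
    (hi : 1 ≤ i) (hl : i ≤ α.length) : α.length ≤ part α i + i - 1 := by
  have h1 := part_strict hd hi hl le_rfl
  have h2 := part_pos hp (by omega : 1 ≤ α.length) le_rfl
  omega

lemma diag_distinct_full {α : List ℕ} (hd : α.Pairwise (· > ·)) (hp : ∀ x ∈ α, 0 < x) {k : ℕ}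
    (hk : 1 ≤ k) (hkl : k ≤ α.length) : diag α k = k := by
  rw [diag_eq_self_iff α hk]
  intro i hi
  simp only [Finset.mem_Icc] at hi
  have := part_distinct_lb hd hp hi.1 (by omega)
  omega

lemma diag_distinct_gt {α : List ℕ} {k : ℕ} (hk : α.length < k) :
    diag α k = ((Finset.Icc 1 α.length).filter (fun i => k ≤ part α i + i - 1)).card := by
  rw [diag_restrict, min_eq_right (by omega : α.length ≤ k)]

lemma beta_antitone {α : List ℕ} (hd : α.Pairwise (· > ·)) {i j : ℕ} (hi : 1 ≤ i) (hij : i ≤ j)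
    (hj : j ≤ α.length) : part α j + j - 1 ≤ part α i + i - 1 := by
  have := part_strict hd hi hij hj
  omega

lemma diag_distinct_ge_iff {α : List ℕ} (hd : α.Pairwise (· > ·)) (hp : ∀ x ∈ α, 0 < x) {i k : ℕ}
    (hi : 1 ≤ i) (hil : i ≤ α.length) (hk : α.length < k) :
    (i ≤ diag α k ↔ k ≤ part α i + i - 1) := by
  rw [diag_distinct_gt hk]
  constructor
  · intro h
    by_contra hcon
    push_neg at hcon
    have hsub : (Finset.Icc 1 α.length).filter (fun i' => k ≤ part α i' + i' - 1) ⊆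
        Finset.Icc 1 (i - 1) := by
      intro i' hi'
      simp only [Finset.mem_filter, Finset.mem_Icc] at hi'
      simp only [Finset.mem_Icc]
      refine ⟨hi'.1.1, ?_⟩
      by_contra hge
      push_neg at hge
      have := beta_antitone hd hi (by omega : i ≤ i') hi'.1.2
      omega
    have := Finset.card_le_card hsub
    rw [Nat.card_Icc] at this
    omega
  · intro h
    have hsub : Finset.Icc 1 i ⊆
        (Finset.Icc 1 α.length).filter (fun i' => k ≤ part α i' + i' - 1) := by
      intro i' hi'
      simp only [Finset.mem_Icc] at hi'
      simp only [Finset.mem_filter, Finset.mem_Icc]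
      refine ⟨⟨hi'.1, by omega⟩, ?_⟩
      have := beta_antitone hd hi'.1 hi'.2 hil
      omega
    have := Finset.card_le_card hsub
    rw [Nat.card_Icc] at this
    omega

lemma dr_distinct {n : ℕ} {α : List ℕ} (hα : IsPartition n α) (hd : α.Pairwise (· > ·))
    (hn : 0 < n) : dr n (diag α) = α.length := by
  obtain ⟨hs, hp, hsum⟩ := hα
  have hlen : α.length ≤ n := hsum ▸ length_le_sum hp
  unfold dr
  have heq : ((Finset.Icc 1 n).filter fun k => diag α k = k) = Finset.Icc 1 α.length := by
    apply Finset.ext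
    intro k
    simp only [Finset.mem_filter, Finset.mem_Icc]
    constructor
    · rintro ⟨⟨h1, h2⟩, h3⟩
      refine ⟨h1, ?_⟩
      by_contra hgt
      push_neg at hgt
      rw [diag_distinct_gt hgt] at h3
      have := Finset.card_le_card (Finset.filter_subset
        (fun i => k ≤ part α i + i - 1) (Finset.Icc 1 α.length))
      rw [Nat.card_Icc] at this
      omega
    · rintro ⟨h1, h2⟩
      exact ⟨⟨h1, le_trans h2 hlen⟩, diag_distinct_full hd hp h1 h2⟩
  rw [heq, Nat.card_Icc]
  omega

lemma recon_diag_eq_self {n : ℕ} {α : List ℕ} (hα : IsPartition n α) (hd : α.Pairwise (· > ·))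
    (hn : 0 < n) : recon n (diag α) = α := by
  have hdr := dr_distinct hα hd hn
  obtain ⟨hs, hp, hsum⟩ := hα
  have hlen : α.length ≤ n := hsum ▸ length_le_sum hp
  apply List.ext_getElem
  · simp [recon, hdr]
  · intro j h1 h2
    simp only [recon, List.getElem_map, List.getElem_range, hdr]
    have hj : j < α.length := by simpa [recon, hdr] using h1
    have hj1 : 1 ≤ j + 1 := by omega
    have hj1l : j + 1 ≤ α.length := by omega
    have hβlb : α.length ≤ part α (j+1) + (j+1) - 1 := part_distinct_lb hd hp hj1 hj1l
    have hβub : part α (j+1) + (j+1) - 1 ≤ n := by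
      have := part_add_le_sum hp hj1 hj1l
      omega
    have hfe : ((Finset.Icc (α.length + 1) n).filter fun k => j + 1 ≤ diag α k) =
        Finset.Icc (α.length + 1) (part α (j+1) + (j+1) - 1) := by
      apply Finset.ext
      intro k
      simp only [Finset.mem_filter, Finset.mem_Icc]
      constructor
      · rintro ⟨⟨g1, g2⟩, g3⟩
        have := (diag_distinct_ge_iff hd hp hj1 hj1l (by omega : α.length < k)).1 g3
        exact ⟨g1, this⟩
      · rintro ⟨g1, g2⟩
        refine ⟨⟨g1, by omega⟩, ?_⟩
        exact (diag_distinct_ge_iff hd hp hj1 hj1l (by omega : α.length < k)).2 g2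
    rw [hfe, Nat.card_Icc]
    have hpj : part α (j+1) = α[j] := by
      unfold part
      exact List.getD_eq_getElem _ _ (by omega)
    omega

lemma recon_spec {n : ℕ} {α : List ℕ} (hα : IsPartition n α) (hn : 0 < n) :
    IsPartition n (recon n (diag α)) ∧ (recon n (diag α)).Pairwise (· > ·) ∧
      ∀ k, diag (recon n (diag α)) k = diag α k := by
  set r := dr n (diag α) with hr
  set c : ℕ → ℕ := fun i => ((Finset.Icc (r+1) n).filter fun k => i ≤ diag α k).card with hc
  set L := recon n (diag α) with hL
  have hrpos : 1 ≤ r := dr_pos hα hn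
  have hrn : r ≤ n := dr_le n (diag α)
  have hlen : L.length = r := by simp [hL, recon, ← hr]
  have hget : ∀ j, (hj : j < r) → L[j]'(by omega) = (r - j) + c (j+1) := by
    intro j hj
    simp [hL, recon, hc, ← hr]
  have hcmono : ∀ i i', i ≤ i' → c i' ≤ c i := by
    intro i i' hii'
    apply Finset.card_le_card
    intro k hk
    simp only [hc, Finset.mem_filter] at hk ⊢
    exact ⟨hk.1, le_trans hii' hk.2⟩
  have hpart : ∀ i, 1 ≤ i → i ≤ r → part L i = (r - (i-1)) + c i := by
    intro i h1 h2
    unfold part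
    rw [List.getD_eq_getElem _ _ (by omega : i - 1 < L.length)]
    have := hget (i-1) (by omega)
    convert this using 3 <;> omega
  have hsorted : L.Pairwise (· > ·) := by
    apply List.pairwise_iff_getElem.2
    intro a b ha hb hab
    rw [hlen] at ha hb
    rw [hget a (by omega), hget b (by omega)]
    have := hcmono (a+1) (b+1) (by omega)
    omega
  have hpos : ∀ x ∈ L, 0 < x := by
    intro x hx
    rw [List.mem_iff_getElem] at hx
    obtain ⟨j, hj, rfl⟩ := hx
    rw [hlen] at hj
    rw [hget j hj]
    omega
  have hsum : L.sum = n := by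
    have hLs : L.sum = ∑ j ∈ Finset.range r, ((r - j) + c (j+1)) := by
      rw [hL, recon]
      rfl
    rw [hLs, Finset.sum_add_distrib]
    have e1 : ∑ j ∈ Finset.range r, (r - j) = ∑ k ∈ Finset.Icc 1 r, diag α k := by
      have h1 : ∀ j ∈ Finset.range r, r - j = (fun x => x + 1) (r - 1 - j) := by
        intro j hj
        simp only [Finset.mem_range] at hj
        show r - j = r - 1 - j + 1
        omega
      rw [Finset.sum_congr rfl h1, Finset.sum_range_reflect (fun x => x + 1) r]
      have h2 : ∀ k ∈ Finset.Icc 1 r, diag α k = k := by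
        intro k hk
        simp only [Finset.mem_Icc] at hk
        exact (diag_full_iff hα hk.1 (le_trans hk.2 hrn)).2 hk.2
      rw [Finset.sum_congr rfl h2, ← Finset.Ico_add_one_right_eq_Icc, Finset.sum_Ico_eq_sum_range]
      apply Finset.sum_congr (by norm_num)
      intro j hj
      omega
    have e2 : ∑ j ∈ Finset.range r, c (j+1) = ∑ k ∈ Finset.Icc (r+1) n, diag α k := by
      simp only [hc]
      simp only [Finset.card_filter]
      rw [Finset.sum_comm]
      apply Finset.sum_congr rfl
      intro k hk
      simp only [Finset.mem_Icc] at hk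
      have hdk : diag α k ≤ r := diag_le_dr hα hn (by omega)
      rw [← Finset.card_filter]
      have hfeq : (Finset.range r).filter (fun j => j + 1 ≤ diag α k) =
          Finset.range (diag α k) := by
        apply Finset.ext
        intro j
        simp only [Finset.mem_filter, Finset.mem_range]
        omega
      rw [hfeq, Finset.card_range]
    rw [e1, e2]
    have hIcc1 : Finset.Icc 1 r = Finset.Ioc 0 r := by
      apply Finset.ext; intro x; simp [Nat.lt_iff_add_one_le]
    have hIcc2 : Finset.Icc (r+1) n = Finset.Ioc r n := by
      apply Finset.ext; intro x; simp only [Finset.mem_Icc, Finset.mem_Ioc]; omega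
    have hIcc3 : Finset.Icc 1 n = Finset.Ioc 0 n := by
      apply Finset.ext; intro x; simp [Nat.lt_iff_add_one_le]
    rw [hIcc1, hIcc2, Finset.sum_Ioc_consecutive _ (Nat.zero_le r) hrn, ← hIcc3]
    exact sum_diag hα
  have hge : L.Pairwise (· ≥ ·) := hsorted.imp (fun h => le_of_lt h)
  have hLpart : IsPartition n L := ⟨hge, hpos, hsum⟩
  refine ⟨hLpart, hsorted, ?_⟩
  intro k
  rcases Nat.eq_zero_or_pos k with rfl | hk
  · simp [_root_.diag]
  rcases le_or_gt k r with hkr | hrk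
  · rw [diag_distinct_full hsorted hpos hk (by omega : k ≤ L.length)]
    exact ((diag_full_iff hα hk (le_trans hkr hrn)).2 hkr).symm
  rcases le_or_gt k n with hkn | hnk
  · rw [diag_restrict L k, min_eq_right (by omega : L.length ≤ k), hlen]
    have hiff : ∀ i ∈ Finset.Icc 1 r, (k ≤ part L i + i - 1 ↔ i ≤ diag α k) := by
      intro i hi
      simp only [Finset.mem_Icc] at hi
      rw [hpart i hi.1 hi.2]
      have hpL : (r - (i-1)) + c i + i - 1 = r + c i := by omega
      rw [hpL]
      have hci : c i = ((Finset.Icc (r+1) n).filter (fun k' => i ≤ diag α k')).card := rfl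
      constructor
      · intro hge'
        by_contra hcon
        push_neg at hcon
        have hsub : (Finset.Icc (r+1) n).filter (fun k' => i ≤ diag α k') ⊆
            Finset.Icc (r+1) (k-1) := by
          intro k' hk'
          simp only [Finset.mem_filter, Finset.mem_Icc] at hk'
          simp only [Finset.mem_Icc]
          refine ⟨hk'.1.1, ?_⟩
          by_contra hge''
          push_neg at hge''
          have := diag_antitoneOn hα hn (by omega : r ≤ k) (by omega : k ≤ k')
          omega
        have hcard := Finset.card_le_card hsub
        rw [Nat.card_Icc] at hcard
        omega
      · intro hle
        have hsub : Finset.Icc (r+1) k ⊆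
            (Finset.Icc (r+1) n).filter (fun k' => i ≤ diag α k') := by
          intro k' hk'
          simp only [Finset.mem_Icc] at hk'
          simp only [Finset.mem_filter, Finset.mem_Icc]
          refine ⟨⟨hk'.1, by omega⟩, ?_⟩
          have := diag_antitoneOn hα hn (by omega : r ≤ k') hk'.2
          omega
        have hcard := Finset.card_le_card hsub
        rw [Nat.card_Icc] at hcard
        omega
    rw [Finset.filter_congr hiff]
    have hdk : diag α k ≤ r := diag_le_dr hα hn (by omega)
    have hfeq : (Finset.Icc 1 r).filter (fun i => i ≤ diag α k) =
        Finset.Icc 1 (diag α k) := by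
      apply Finset.ext
      intro i
      simp only [Finset.mem_filter, Finset.mem_Icc]
      omega
    rw [hfeq, Nat.card_Icc]
    omega
  · rw [diag_eq_zero_of_gt hLpart hnk, diag_eq_zero_of_gt hα hnk]

/-- Corollary 4: the number of distinct diagonal sequences of partitions of `n` equals the
number of partitions of `n` into distinct parts. -/
theorem card_diagSeqs_eq_card_distinct_partitions (n : ℕ) (hn : 0 < n) :
    {f : ℕ → ℕ | ∃ α, IsPartition n α ∧ ∀ k, f k = diag α k}.ncard =
      {α : List ℕ | IsPartition n α ∧ α.Pairwise (· > ·)}.ncard := by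
  have hset : {f : ℕ → ℕ | ∃ α, IsPartition n α ∧ ∀ k, f k = diag α k} =
      (fun (α : List ℕ) (k : ℕ) => diag α k) ''
        {α : List ℕ | IsPartition n α ∧ α.Pairwise (· > ·)} := by
    ext f
    constructor
    · rintro ⟨α, hα, hf⟩
      obtain ⟨h1, h2, h3⟩ := recon_spec hα hn
      refine ⟨recon n (diag α), ⟨h1, h2⟩, ?_⟩
      funext k
      show diag (recon n (diag α)) k = f k
      rw [h3 k, hf k]
    · rintro ⟨β, ⟨hβ, _⟩, rfl⟩
      exact ⟨β, hβ, fun k => rfl⟩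
  rw [hset]
  apply Set.ncard_image_of_injOn
  rintro β ⟨hβ, hβd⟩ β' ⟨hβ', hβd'⟩ h
  have hre : recon n (diag β) = recon n (diag β') := by
    rw [show diag β = diag β' from h]
  rwa [recon_diag_eq_self hβ hβd hn, recon_diag_eq_self hβ' hβd' hn] at hre
end

section
/- Let α and β be partitions of n with δ(α) = δ(β). If the parts of α are strictly decreasing (α_1 > α_2 > … > α_t) and the parts of β are strictly decreasing, then α = β. Equivalently, a diagonal sequence determines at most one partition with strictly decreasing parts. -/
lemma part_eq_get (α : List ℕ) (i : ℕ) (h1 : 1 ≤ i) (h2 : i ≤ α.length) :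
    part α i = α[i-1]'(by omega) := by
  simp [part, List.getD_eq_getElem?_getD,
    List.getElem?_eq_getElem (by omega : i - 1 < α.length)]

lemma part_pos_iff (α : List ℕ) (hpos : ∀ x ∈ α, 0 < x) (i : ℕ) (h1 : 1 ≤ i) :
    0 < part α i ↔ i ≤ α.length := by
  constructor
  · intro h
    by_contra hc
    push_neg at hc
    have : part α i = 0 := by
      simp [part, List.getD_eq_getElem?_getD,
        List.getElem?_eq_none (by omega : α.length ≤ i - 1)]
    omega
  · intro h
    rw [part_eq_get α i h1 h]
    exact hpos _ (List.getElem_mem _)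

lemma part_adj (α : List ℕ) (hd : α.Pairwise (· > ·)) (j : ℕ) (h1 : 1 ≤ j)
    (h2 : j + 1 ≤ α.length) : part α (j+1) < part α j := by
  rw [part_eq_get α (j+1) (by omega) h2, part_eq_get α j h1 (by omega)]
  exact List.pairwise_iff_getElem.mp hd (j-1) (j+1-1) (by omega) (by omega) (by omega)

lemma le_diag_iff (α : List ℕ) (hd : α.Pairwise (· > ·)) (hpos : ∀ x ∈ α, 0 < x)
    (i k : ℕ) (h1 : 1 ≤ i) :
    i ≤ diag α k ↔ i ≤ k ∧ k < part α i + i := by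
  set S := (Finset.Icc 1 k).filter (fun i => k ≤ part α i + i - 1) with hS
  have hdiag : diag α k = S.card := rfl
  rw [hdiag]
  have hmem : ∀ j, j ∈ S ↔ 1 ≤ j ∧ j ≤ k ∧ k < part α j + j := by
    intro j
    simp only [hS, Finset.mem_filter, Finset.mem_Icc]
    constructor
    · rintro ⟨⟨ha, hb⟩, hc⟩; exact ⟨ha, hb, by omega⟩
    · rintro ⟨ha, hb, hc⟩; exact ⟨⟨ha, hb⟩, by omega⟩
  have hdown1 : ∀ j, 1 ≤ j → j + 1 ∈ S → j ∈ S := by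
    intro j hj hm
    rw [hmem] at hm
    obtain ⟨-, hk, hc⟩ := hm
    have hp1 : 0 < part α (j+1) := by omega
    have hlen : j + 1 ≤ α.length := (part_pos_iff α hpos (j+1) (by omega)).mp hp1
    have := part_adj α hd j hj hlen
    rw [hmem]
    exact ⟨hj, by omega, by omega⟩
  have hdown : ∀ d j, 1 ≤ j → j + d ∈ S → j ∈ S := by
    intro d
    induction d with
    | zero => intro j _ h; simpa using h
    | succ d ih =>
      intro j hj h
      have : j + d ∈ S := hdown1 (j + d) (by omega) (by rwa [show j + (d+1) = (j+d)+1 by omega] at h)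
      exact ih j hj this
  constructor
  · intro h
    by_contra hc
    push_neg at hc
    have hiS : i ∉ S := by
      rw [hmem]; omega
    have hsub : S ⊆ Finset.Icc 1 (i-1) := by
      intro j hjS
      have hj := (hmem j).mp hjS
      have : j < i := by
        by_contra hge
        push_neg at hge
        exact hiS (hdown (j - i) i h1 (by rwa [show i + (j - i) = j by omega]))
      rw [Finset.mem_Icc]; omega
    have := Finset.card_le_card hsub
    rw [Nat.card_Icc] at this
    omega
  · rintro ⟨ha, hb⟩
    have hsub : Finset.Icc 1 i ⊆ S := by
      intro j hj
      rw [Finset.mem_Icc] at hj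
      have hiS : i ∈ S := (hmem i).mpr ⟨h1, ha, hb⟩
      exact hdown (i - j) j hj.1 (by rwa [show j + (i - j) = i by omega])
    have := Finset.card_le_card hsub
    rw [Nat.card_Icc] at this
    omega

/-- A diagonal sequence determines at most one partition with strictly decreasing parts. -/
theorem eq_of_diag_eq_of_strictDesc (n : ℕ) (α β : List ℕ)
    (hα : IsPartition n α) (hβ : IsPartition n β)
    (hαd : α.Pairwise (· > ·)) (hβd : β.Pairwise (· > ·))
    (hδ : ∀ k, diag α k = diag β k) : α = β := by
  obtain ⟨-, hp, -⟩ := hα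
  obtain ⟨-, hp', -⟩ := hβ
  have key : ∀ i k, 1 ≤ i → ((i ≤ k ∧ k < part α i + i) ↔ (i ≤ k ∧ k < part β i + i)) := by
    intro i k h1
    rw [← le_diag_iff α hαd hp i k h1, ← le_diag_iff β hβd hp' i k h1, hδ k]
  have h1 : ∀ j, 1 ≤ j → j ≤ α.length → j ≤ β.length := by
    intro j hj hjl
    have hpα : 0 < part α j := (part_pos_iff α hp j hj).mpr hjl
    have := (key j j hj).mp ⟨le_refl j, by omega⟩
    exact (part_pos_iff β hp' j hj).mp (by omega)
  have h2 : ∀ j, 1 ≤ j → j ≤ β.length → j ≤ α.length := by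
    intro j hj hjl
    have hpβ : 0 < part β j := (part_pos_iff β hp' j hj).mpr hjl
    have := (key j j hj).mpr ⟨le_refl j, by omega⟩
    exact (part_pos_iff α hp j hj).mp (by omega)
  have hlen : α.length = β.length := by
    rcases Nat.eq_zero_or_pos α.length with h | h
    · rcases Nat.eq_zero_or_pos β.length with h' | h'
      · omega
      · have := h2 β.length h' (le_refl _); omega
    · rcases Nat.eq_zero_or_pos β.length with h' | h'
      · have := h1 α.length h (le_refl _); omega
      · have := h1 α.length h (le_refl _)
        have := h2 β.length h' (le_refl _)
        omega
  have hpart : ∀ j, 1 ≤ j → j ≤ α.length → part α j = part β j := by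
    intro j hj hjl
    have hjl' : j ≤ β.length := h1 j hj hjl
    have pα : 0 < part α j := (part_pos_iff α hp j hj).mpr hjl
    have pβ : 0 < part β j := (part_pos_iff β hp' j hj).mpr hjl'
    have ka := (key j (part α j + j - 1) hj).mp ⟨by omega, by omega⟩
    have kb := (key j (part β j + j - 1) hj).mpr ⟨by omega, by omega⟩
    omega
  apply List.ext_getElem hlen
  intro i hi1 hi2
  have := hpart (i+1) (by omega) (by omega)
  rw [part_eq_get α (i+1) (by omega) (by omega),
      part_eq_get β (i+1) (by omega) (by omega)] at this
  simpa using this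
end

section
/- Let α = (α_1,…,α_t) be a partition of n whose diagonal sequence is δ(α) = (1, 2, …, q−1, q, q^{(s_q)}, (q−1)^{(s_{q−1})}, …, 1^{(s_1)}). Then the largest part α_1 belongs to the set A_1 = {q, q + s_q, q + s_q + s_{q−1}, …, q + s_q + s_{q−1} + … + s_1}, i.e. α_1 = q + Σ_{k=i}^{q} s_k for some 1 ≤ i ≤ q, or α_1 = q. -/
def stairTail (q : ℕ) (s : ℕ → ℕ) : List ℕ :=
  (List.range q).reverse.flatMap fun j => List.replicate (s (j + 1)) (j + 1)

lemma stairTail_succ (q : ℕ) (s : ℕ → ℕ) :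
    stairTail (q + 1) s = List.replicate (s (q + 1)) (q + 1) ++ stairTail q s := by
  simp [stairTail, List.range_succ]

lemma stairTail_length (q : ℕ) (s : ℕ → ℕ) :
    (stairTail q s).length = ∑ k ∈ Finset.Icc 1 q, s k := by
  induction q with
  | zero => simp [stairTail]
  | succ q ih =>
      rw [stairTail_succ, List.length_append, ih, List.length_replicate,
        Finset.sum_Icc_succ_top (by omega)]
      omega

lemma stairTail_getD (s : ℕ → ℕ) :
    ∀ q i r, 1 ≤ i → i ≤ q → (∑ k ∈ Finset.Icc (i + 1) q, s k) ≤ r →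
      r < ∑ k ∈ Finset.Icc i q, s k → (stairTail q s).getD r 0 = i := by
  intro q
  induction q with
  | zero => intro i r h1 h2 _ _; omega
  | succ q ih =>
      intro i r h1 h2 hlo hhi
      rw [stairTail_succ]
      rcases eq_or_lt_of_le h2 with heq | hiq
      · -- i = q + 1
        have hhi' : r < s (q + 1) := by
          rw [heq] at hhi
          simpa using hhi
        rw [List.getD_append _ _ _ _ (by simpa using hhi'),
          List.getD_eq_getElem _ _ (by simpa using hhi')]
        simp [heq]
      · have hq : i ≤ q := by omega
        have hmem : q + 1 ∈ Finset.Icc (i + 1) (q + 1) := by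
          simp [Finset.mem_Icc]; omega
        have hs : s (q + 1) ≤ r := le_trans (Finset.single_le_sum (fun _ _ => Nat.zero_le _) hmem) hlo
        rw [List.getD_append_right _ _ _ _ (by simpa using hs)]
        have e1 : (∑ k ∈ Finset.Icc (i + 1) (q + 1), s k)
            = (∑ k ∈ Finset.Icc (i + 1) q, s k) + s (q + 1) :=
          Finset.sum_Icc_succ_top (by omega) _
        have e2 : (∑ k ∈ Finset.Icc i (q + 1), s k)
            = (∑ k ∈ Finset.Icc i q, s k) + s (q + 1) :=
          Finset.sum_Icc_succ_top (by omega) _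
        rw [List.length_replicate]
        exact ih i (r - s (q + 1)) h1 hq (by omega) (by omega)

lemma stairSeq_eq (q : ℕ) (s : ℕ → ℕ) :
    stairSeq q s = (List.range q).map (· + 1) ++ stairTail q s := rfl

lemma stairSeq_length (q : ℕ) (s : ℕ → ℕ) :
    (stairSeq q s).length = q + ∑ k ∈ Finset.Icc 1 q, s k := by
  rw [stairSeq_eq, List.length_append, List.length_map, List.length_range, stairTail_length]

lemma stairSeq_getD_lt (q : ℕ) (s : ℕ → ℕ) {p : ℕ} (h : p < q) :
    (stairSeq q s).getD p 0 = p + 1 := by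
  rw [stairSeq_eq, List.getD_append _ _ _ _ (by simpa using h),
    List.getD_eq_getElem _ _ (by simpa using h)]
  simp

lemma stairSeq_getD_ge (q : ℕ) (s : ℕ → ℕ) {p : ℕ} (h : q ≤ p) :
    (stairSeq q s).getD p 0 = (stairTail q s).getD (p - q) 0 := by
  rw [stairSeq_eq, List.getD_append_right _ _ _ _ (by simpa using h)]
  simp

lemma part_antitone (α : List ℕ) (hs : α.Pairwise (· ≥ ·)) {i j : ℕ} (hi : 1 ≤ i) (hij : i ≤ j) :
    part α j ≤ part α i := by
  unfold part
  by_cases hj : j - 1 < α.length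
  · have hi' : i - 1 < α.length := by omega
    rw [List.getD_eq_getElem _ _ hj, List.getD_eq_getElem _ _ hi']
    rcases eq_or_lt_of_le (show i - 1 ≤ j - 1 by omega) with he | hlt
    · simp [he]
    · exact hs.rel_get_of_lt (a := ⟨i - 1, hi'⟩) (b := ⟨j - 1, hj⟩) hlt
  · rw [List.getD_eq_default _ _ (by omega)]
    exact Nat.zero_le _

/-- Proposition 6: if `δ(α) = (1, …, q, q^{(s_q)}, …, 1^{(s_1)})`, then the largest part
`α_1` lies in `A_1 = {q, q+s_q, q+s_q+s_{q-1}, …, q+s_q+…+s_1}`. -/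
theorem first_part_mem_A1 (n q : ℕ) (hq : 1 ≤ q) (s : ℕ → ℕ) (α : List ℕ)
    (hα : IsPartition n α)
    (hdiag : ∀ k, 1 ≤ k → diag α k = (stairSeq q s).getD (k - 1) 0) :
    α.getD 0 0 = q ∨ ∃ i, 1 ≤ i ∧ i ≤ q ∧ α.getD 0 0 = q + ∑ k ∈ Finset.Icc i q, s k := by
  obtain ⟨hsort, hpos, hsum⟩ := hα
  obtain ⟨m, hm⟩ : ∃ m, part α 1 = m := ⟨_, rfl⟩
  have hget : α.getD 0 0 = m := hm
  -- q ≤ m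
  have hdq : diag α q = q := by
    have h := hdiag q hq
    rw [stairSeq_getD_lt q s (by omega)] at h
    rw [h]; omega
  have hqm : q ≤ m := by
    have hsub : (Finset.Icc 1 q).filter (fun i => q ≤ part α i + i - 1) ⊆ Finset.Icc 1 q :=
      Finset.filter_subset _ _
    have hcard : (Finset.Icc 1 q).card ≤
        ((Finset.Icc 1 q).filter (fun i => q ≤ part α i + i - 1)).card := by
      have : ((Finset.Icc 1 q).filter (fun i => q ≤ part α i + i - 1)).card = q := hdq
      rw [this, Nat.card_Icc]; omega
    have heq := Finset.eq_of_subset_of_card_le hsub hcard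
    have h1 : (1 : ℕ) ∈ Finset.Icc 1 q := by simp [hq]
    rw [← heq] at h1
    have := (Finset.mem_filter.mp h1).2
    omega
  have hm1 : 1 ≤ m := le_trans hq hqm
  -- m ≤ q + S₁
  have hmT1 : m ≤ q + ∑ k ∈ Finset.Icc 1 q, s k := by
    by_contra hc
    push_neg at hc
    have h1m : (1 : ℕ) ∈ (Finset.Icc 1 m).filter (fun i => m ≤ part α i + i - 1) := by
      rw [Finset.mem_filter, Finset.mem_Icc]
      refine ⟨⟨le_refl _, hm1⟩, ?_⟩
      omega
    have hpos' : 0 < diag α m := Finset.card_pos.mpr ⟨1, h1m⟩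
    have h := hdiag m hm1
    rw [List.getD_eq_default _ _ (by rw [stairSeq_length]; omega)] at h
    omega
  by_cases hmq : m = q
  · left; rw [hget, hmq]
  right
  have hmgt : q < m := lt_of_le_of_ne hqm fun h => hmq h.symm
  obtain ⟨i, hidef⟩ :
      ∃ i, Nat.findGreatest (fun j => m ≤ q + ∑ k ∈ Finset.Icc j q, s k) q = i := ⟨_, rfl⟩
  have hi1 : 1 ≤ i := by
    rw [← hidef]
    exact Nat.le_findGreatest (P := fun j => m ≤ q + ∑ k ∈ Finset.Icc j q, s k) hq hmT1
  have hiq : i ≤ q := by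
    rw [← hidef]
    exact Nat.findGreatest_le q
  have hPi : m ≤ q + ∑ k ∈ Finset.Icc i q, s k := by
    have h := Nat.findGreatest_spec (P := fun j => m ≤ q + ∑ k ∈ Finset.Icc j q, s k) hq hmT1
    rw [hidef] at h
    exact h
  have hTi1 : q + ∑ k ∈ Finset.Icc (i + 1) q, s k < m := by
    rcases eq_or_lt_of_le hiq with heq | hlt
    · have he : Finset.Icc (i + 1) q = ∅ := Finset.Icc_eq_empty (by omega)
      rw [he, Finset.sum_empty]
      omega
    · have hnot : ¬ (fun j => m ≤ q + ∑ k ∈ Finset.Icc j q, s k) (i + 1) :=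
        Nat.findGreatest_is_greatest (P := fun j => m ≤ q + ∑ k ∈ Finset.Icc j q, s k)
          (n := q) (k := i + 1) (by rw [hidef]; omega) (by omega)
      simp only [] at hnot
      omega
  rcases eq_or_lt_of_le hPi with heq | hlt2
  · exact ⟨i, hi1, hiq, by rw [hget]; exact heq⟩
  exfalso
  -- d_m = i and d_{m+1} = i
  have hdm : diag α m = i := by
    rw [hdiag m hm1, stairSeq_getD_ge q s (by omega)]
    exact stairTail_getD s q i (m - 1 - q) hi1 hiq (by omega) (by omega)
  have hdm1 : diag α (m + 1) = i := by
    rw [hdiag (m + 1) (by omega), stairSeq_getD_ge q s (by omega)]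
    have : m + 1 - 1 - q = m - q := by omega
    rw [this]
    exact stairTail_getD s q i (m - q) hi1 hiq (by omega) (by omega)
  set X := (Finset.Icc 1 m).filter (fun j => m + 1 ≤ part α j + j - 1) with hX
  set Y := (Finset.Icc 1 m).filter (fun j => part α j + j - 1 = m) with hY
  have hsplit : diag α m = X.card + Y.card := by
    unfold diag
    have hfe : (Finset.Icc 1 m).filter (fun j => m ≤ part α j + j - 1)
        = X ∪ Y := by
      rw [hX, hY, ← Finset.filter_or]
      apply Finset.filter_congr
      intro j hj
      rw [Finset.mem_Icc] at hj
      constructor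
      · intro h; omega
      · intro h; omega
    rw [hfe, Finset.card_union_of_disjoint]
    rw [Finset.disjoint_left]
    intro a haX haY
    rw [hX, Finset.mem_filter] at haX
    rw [hY, Finset.mem_filter] at haY
    omega
  have hFm1 : diag α (m + 1)
      = X.card + (if m + 1 ≤ part α (m + 1) + (m + 1) - 1 then 1 else 0) := by
    unfold diag
    rw [← Finset.insert_Icc_right_eq_Icc_add_one (by omega), Finset.filter_insert]
    by_cases hcond : m + 1 ≤ part α (m + 1) + (m + 1) - 1
    · rw [if_pos hcond, if_pos hcond, Finset.card_insert_of_notMem]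
      intro hmem
      have := Finset.mem_Icc.mp (Finset.mem_filter.mp hmem).1
      omega
    · rw [if_neg hcond, if_neg hcond, hX]
      simp only [Nat.add_zero]
  have h1Y : (1 : ℕ) ∈ Y := by
    rw [hY, Finset.mem_filter, Finset.mem_Icc]
    refine ⟨⟨le_refl _, hm1⟩, ?_⟩
    omega
  have hY1 : 0 < Y.card := Finset.card_pos.mpr ⟨1, h1Y⟩
  have hcond : m + 1 ≤ part α (m + 1) + (m + 1) - 1 := by
    by_contra hc
    rw [if_neg hc] at hFm1
    omega
  have hYcard : Y.card = 1 := by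
    rw [if_pos hcond] at hFm1
    omega
  have hYeq : Y = {1} := by
    obtain ⟨a, ha⟩ := Finset.card_eq_one.mp hYcard
    rw [ha] at h1Y ⊢
    rw [Finset.mem_singleton] at h1Y
    rw [h1Y]
  have hnotY : ∀ j, 2 ≤ j → j ≤ m → part α j + j - 1 ≠ m := by
    intro j h2 hjm hne
    have : j ∈ Y := by
      rw [hY, Finset.mem_filter, Finset.mem_Icc]
      exact ⟨⟨by omega, hjm⟩, hne⟩
    rw [hYeq, Finset.mem_singleton] at this
    omega
  -- find a row a with small hook
  have hdm_lt : diag α m < (Finset.Icc 1 m).card := by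
    rw [hdm, Nat.card_Icc]; omega
  obtain ⟨a, haIcc, haF⟩ :
      ∃ a ∈ Finset.Icc 1 m,
        a ∉ (Finset.Icc 1 m).filter (fun j => m ≤ part α j + j - 1) := by
    by_contra hc
    push_neg at hc
    have hsub : Finset.Icc 1 m ⊆ (Finset.Icc 1 m).filter (fun j => m ≤ part α j + j - 1) := hc
    have := Finset.card_le_card hsub
    unfold diag at hdm_lt
    omega
  rw [Finset.mem_Icc] at haIcc
  have hha : part α a + a - 1 < m := by
    by_contra hc
    exact haF (Finset.mem_filter.mpr ⟨Finset.mem_Icc.mpr haIcc, by omega⟩)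
  have ha2 : 2 ≤ a := by
    by_contra hc
    have ha1 : a = 1 := by omega
    rw [ha1] at hha
    omega
  -- IVT upward
  have hstep : ∀ j, 1 ≤ j → part α (j + 1) + (j + 1) - 1 ≤ (part α j + j - 1) + 1 := by
    intro j hj
    have := part_antitone α hsort hj (Nat.le_add_right j 1)
    omega
  have hclaim : ∀ j, a ≤ j → j ≤ m → part α j + j - 1 < m := by
    intro j
    induction j with
    | zero => intro h1 _; omega
    | succ j ih =>
        intro haj hjm
        rcases eq_or_lt_of_le haj with he | hlt
        · rw [← he]; exact hha
        · have hj1 : a ≤ j := by omega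
          have hih := ih hj1 (by omega)
          have hs := hstep j (by omega)
          have hne := hnotY (j + 1) (by omega) hjm
          omega
  have hmm := hclaim m (by omega) (le_refl m)
  have hpm : part α m = 0 := by omega
  have hpm1 : part α (m + 1) ≤ part α m := part_antitone α hsort (by omega) (by omega)
  omega
end

section
/- Let α be a partition of n with δ(α) = (1, 2, …, q−1, q, q^{(s_q)}, (q−1)^{(s_{q−1})}, …, 1^{(s_1)}). Let ᾱ be the partition with ᾱ_i = q − i + 1 + Σ_{k=i}^{q} s_k for 1 ≤ i ≤ q, and let α̲ = ᾱ* be its conjugate. Then ᾱ majorizes α and α majorizes α̲, i.e. ᾱ ≻ α ≻ α̲. -/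
/-- The conjugate partition of `α`, as a list: `α*_j = |{i : α_i ≥ j}|` for `1 ≤ j ≤ α_1`. -/
def conjList (α : List ℕ) : List ℕ :=
  (List.range (α.getD 0 0)).map fun j => α.countP fun x => decide (j + 1 ≤ x)

lemma tail_getD_s10 (q : ℕ) (s : ℕ → ℕ) (i : ℕ) (hi : 1 ≤ i) : ∀ r,
    (i ≤ ((List.range q).reverse.flatMap fun j => List.replicate (s (j + 1)) (j + 1)).getD r 0 ↔
      i ≤ q ∧ r < ∑ t ∈ Finset.Icc i q, s t) := by
  induction q with
  | zero => intro r; simp; omega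
  | succ q ih =>
    intro r
    rw [List.range_succ, List.reverse_append, List.reverse_singleton, List.singleton_append,
      List.flatMap_cons]
    by_cases hr : r < s (q + 1)
    · rw [List.getD_append _ _ _ _ (by simpa using hr)]
      have : (List.replicate (s (q + 1)) (q + 1)).getD r 0 = q + 1 := by
        rw [List.getD_eq_getElem?_getD, List.getElem?_replicate]
        simp [hr]
      rw [this]
      constructor
      · intro h
        refine ⟨h, ?_⟩
        calc r < s (q + 1) := hr
        _ ≤ ∑ t ∈ Finset.Icc i (q + 1), s t :=
          Finset.single_le_sum (f := s) (fun t _ => Nat.zero_le _) (by simp [Finset.mem_Icc]; omega)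
      · intro h; exact h.1
    · rw [List.getD_append_right _ _ _ _ (by simpa using not_lt.mp hr)]
      rw [List.length_replicate, ih (r - s (q + 1))]
      have hsum : ∑ t ∈ Finset.Icc i (q + 1), s t
          = (if i ≤ q + 1 then (∑ t ∈ Finset.Icc i q, s t) + s (q + 1) else 0) := by
        by_cases h : i ≤ q + 1
        · rw [if_pos h, Finset.sum_Icc_succ_top h]
        · rw [if_neg h, Finset.Icc_eq_empty (by omega), Finset.sum_empty]
      rw [hsum]
      by_cases h : i ≤ q + 1
      · rw [if_pos h]
        constructor
        · rintro ⟨h1, h2⟩; exact ⟨by omega, by omega⟩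
        · rintro ⟨h1, h2⟩
          by_cases hiq : i ≤ q
          · exact ⟨hiq, by omega⟩
          · exfalso
            have : i = q + 1 := by omega
            subst this
            rw [Finset.Icc_eq_empty (by omega), Finset.sum_empty] at h2
            omega
      · rw [if_neg h]; constructor
        · rintro ⟨h1, h2⟩; omega
        · rintro ⟨h1, h2⟩; omega


-- helper lemmas, to be pasted above the theorem later
lemma sum_Icc_one {M : Type*} [AddCommMonoid M] (m : ℕ) (f : ℕ → M) :
    ∑ i ∈ Finset.Icc 1 m, f i = ∑ i ∈ Finset.range m, f (i + 1) := by
  induction m with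
  | zero => simp
  | succ m ih => rw [Finset.sum_Icc_succ_top (by omega), ih, Finset.sum_range_succ]

lemma take_sum (l : List ℕ) : ∀ m, (l.take m).sum = ∑ i ∈ Finset.range m, l.getD i 0 := by
  induction l with
  | nil => intro m; simp
  | cons a l ih =>
    intro m
    cases m with
    | zero => simp
    | succ m =>
      rw [List.take_succ_cons, List.sum_cons, ih m, Finset.sum_range_succ']
      simp [add_comm]

lemma countP_range (q : ℕ) (p : ℕ → Bool) :
    (List.range q).countP p = ∑ i ∈ Finset.range q, if p i then 1 else 0 := by
  induction q with
  | zero => simp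
  | succ q ih =>
    rw [List.range_succ, List.countP_append, ih, Finset.sum_range_succ]
    by_cases h : p q <;> simp [List.countP_cons, h]

lemma map_range_getD (q : ℕ) (f : ℕ → ℕ) (i : ℕ) :
    ((List.range q).map f).getD i 0 = if i < q then f i else 0 := by
  by_cases h : i < q
  · rw [List.getD_eq_getElem?_getD, List.getElem?_map, List.getElem?_range h]
    simp [h]
  · rw [List.getD_eq_getElem?_getD, List.getElem?_eq_none (by simpa using not_lt.mp h)]
    simp [h]

lemma stair_getD (q : ℕ) (s : ℕ → ℕ) (i k : ℕ) (hi : 1 ≤ i) (hk : 1 ≤ k) :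
    i ≤ (stairSeq q s).getD (k - 1) 0 ↔
      i ≤ q ∧ i ≤ k ∧ k ≤ q + ∑ t ∈ Finset.Icc i q, s t := by
  unfold stairSeq
  by_cases hkq : k - 1 < q
  · rw [List.getD_append _ _ _ _ (by simpa using hkq)]
    have : ((List.range q).map (· + 1)).getD (k - 1) 0 = k := by
      rw [List.getD_eq_getElem?_getD, List.getElem?_map, List.getElem?_range hkq]
      simp; omega
    rw [this]
    constructor
    · intro h
      refine ⟨by omega, h, ?_⟩
      have : k ≤ q := by omega
      omega
    · rintro ⟨_, h, _⟩; exact h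
  · rw [List.getD_append_right _ _ _ _ (by simpa using not_lt.mp hkq)]
    rw [List.length_map, List.length_range, tail_getD_s10 q s i hi]
    constructor
    · rintro ⟨h1, h2⟩; exact ⟨h1, by omega, by omega⟩
    · rintro ⟨h1, _, h3⟩; exact ⟨h1, by omega⟩

lemma abar_le (q : ℕ) (s : ℕ → ℕ) (i : ℕ) (hi : 1 ≤ i) (hiq : i ≤ q) :
    abar q s i ≤ q + ∑ t ∈ Finset.Icc 1 q, s t := by
  have h : ∑ t ∈ Finset.Icc i q, s t ≤ ∑ t ∈ Finset.Icc 1 q, s t :=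
    Finset.sum_le_sum_of_subset (Finset.Icc_subset_Icc hi le_rfl)
  unfold abar; omega

lemma filter_k_card (q : ℕ) (s : ℕ → ℕ) (i : ℕ) (hi : 1 ≤ i) :
    ((Finset.Icc 1 (q + ∑ t ∈ Finset.Icc 1 q, s t)).filter
        (fun k => i ≤ (stairSeq q s).getD (k - 1) 0)).card
      = if i ≤ q then abar q s i else 0 := by
  set L := q + ∑ t ∈ Finset.Icc 1 q, s t with hLdef
  set B := q + ∑ t ∈ Finset.Icc i q, s t with hBdef
  have hBL : B ≤ L := by
    have h : ∑ t ∈ Finset.Icc i q, s t ≤ ∑ t ∈ Finset.Icc 1 q, s t :=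
      Finset.sum_le_sum_of_subset (Finset.Icc_subset_Icc hi le_rfl)
    omega
  by_cases hiq : i ≤ q
  · rw [if_pos hiq]
    have hset : (Finset.Icc 1 L).filter (fun k => i ≤ (stairSeq q s).getD (k - 1) 0)
        = Finset.Icc i B := by
      ext k
      simp only [Finset.mem_filter, Finset.mem_Icc]
      constructor
      · rintro ⟨⟨hk1, hkL⟩, hk⟩
        have := (stair_getD q s i k hi hk1).mp hk
        exact ⟨this.2.1, this.2.2⟩
      · rintro ⟨h1, h2⟩
        have hk1 : 1 ≤ k := le_trans hi h1
        refine ⟨⟨hk1, le_trans h2 hBL⟩, (stair_getD q s i k hi hk1).mpr ⟨hiq, h1, h2⟩⟩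
    rw [hset, Nat.card_Icc]
    unfold abar; omega
  · rw [if_neg hiq]
    rw [Finset.card_eq_zero, Finset.filter_eq_empty_iff]
    intro k hk
    rw [Finset.mem_Icc] at hk
    intro hcon
    exact hiq ((stair_getD q s i k hi hk.1).mp hcon).1

lemma sumA (q : ℕ) (s : ℕ → ℕ) (m : ℕ) :
    ((abarList q s).take m).sum =
      ∑ k ∈ Finset.Icc 1 (q + ∑ t ∈ Finset.Icc 1 q, s t),
        min ((stairSeq q s).getD (k - 1) 0) m := by
  set L := q + ∑ t ∈ Finset.Icc 1 q, s t with hLdef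
  have hrhs : ∀ k, min ((stairSeq q s).getD (k - 1) 0) m
      = ∑ i ∈ Finset.Icc 1 m, if i ≤ (stairSeq q s).getD (k - 1) 0 then 1 else 0 := by
    intro k
    rw [← Finset.card_filter]
    have : (Finset.Icc 1 m).filter (fun i => i ≤ (stairSeq q s).getD (k - 1) 0)
        = Finset.Icc 1 (min ((stairSeq q s).getD (k - 1) 0) m) := by
      ext i; simp only [Finset.mem_filter, Finset.mem_Icc]; omega
    rw [this, Nat.card_Icc]; omega
  calc ((abarList q s).take m).sum
      = ∑ i ∈ Finset.range m, (abarList q s).getD i 0 := take_sum _ m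
    _ = ∑ i ∈ Finset.range m, if i < q then abar q s (i + 1) else 0 := by
        refine Finset.sum_congr rfl fun i _ => ?_
        exact map_range_getD q _ i
    _ = ∑ i ∈ Finset.Icc 1 m, if i ≤ q then abar q s i else 0 := by
        rw [sum_Icc_one]
        refine Finset.sum_congr rfl fun i _ => ?_
        simp only [Nat.lt_iff_add_one_le]
    _ = ∑ i ∈ Finset.Icc 1 m, ((Finset.Icc 1 L).filter
          (fun k => i ≤ (stairSeq q s).getD (k - 1) 0)).card := by
        refine Finset.sum_congr rfl fun i hi => ?_
        rw [Finset.mem_Icc] at hi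
        rw [filter_k_card q s i hi.1]
    _ = ∑ i ∈ Finset.Icc 1 m, ∑ k ∈ Finset.Icc 1 L,
          if i ≤ (stairSeq q s).getD (k - 1) 0 then 1 else 0 := by
        refine Finset.sum_congr rfl fun i _ => Finset.card_filter _ _
    _ = ∑ k ∈ Finset.Icc 1 L, ∑ i ∈ Finset.Icc 1 m,
          if i ≤ (stairSeq q s).getD (k - 1) 0 then 1 else 0 := Finset.sum_comm
    _ = ∑ k ∈ Finset.Icc 1 L, min ((stairSeq q s).getD (k - 1) 0) m := by
        refine Finset.sum_congr rfl fun k _ => (hrhs k).symm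

lemma stair_le_q (q : ℕ) (s : ℕ → ℕ) (k : ℕ) (hk : 1 ≤ k) :
    (stairSeq q s).getD (k - 1) 0 ≤ q := by
  by_cases h : 1 ≤ (stairSeq q s).getD (k - 1) 0
  · exact ((stair_getD q s _ k h hk).mp le_rfl).1
  · omega

lemma abar_one (q : ℕ) (s : ℕ → ℕ) (hq : 1 ≤ q) :
    abar q s 1 = q + ∑ t ∈ Finset.Icc 1 q, s t := by
  unfold abar; omega

lemma sumB (q : ℕ) (s : ℕ → ℕ) (hq : 1 ≤ q) (m : ℕ) :
    ((conjList (abarList q s)).take m).sum =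
      ∑ k ∈ Finset.Icc 1 (q + ∑ t ∈ Finset.Icc 1 q, s t),
        ((stairSeq q s).getD (k - 1) 0 - (k - m)) := by
  set L := q + ∑ t ∈ Finset.Icc 1 q, s t with hLdef
  have hhead : (abarList q s).getD 0 0 = L := by
    rw [show (abarList q s).getD 0 0 = if 0 < q then abar q s 1 else 0 from
      map_range_getD q _ 0, if_pos (show 0 < q by omega), abar_one q s hq]
  -- LHS = ∑_{i ∈ Icc 1 q} min (abar q s i) m
  have hLHS : ((conjList (abarList q s)).take m).sum
      = ∑ i ∈ Finset.Icc 1 q, min (abar q s i) m := by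
    calc ((conjList (abarList q s)).take m).sum
        = ∑ j ∈ Finset.range m, (conjList (abarList q s)).getD j 0 := take_sum _ m
      _ = ∑ j ∈ Finset.range m, if j < L then
            ((abarList q s).countP fun x => decide (j + 1 ≤ x)) else 0 := by
          refine Finset.sum_congr rfl fun j _ => ?_
          rw [conjList, hhead]
          exact map_range_getD L _ j
      _ = ∑ j ∈ Finset.range m, if j < L then
            (∑ i ∈ Finset.range q, if j + 1 ≤ abar q s (i + 1) then 1 else 0) else 0 := by
          refine Finset.sum_congr rfl fun j _ => ?_
          rw [abarList, List.countP_map, countP_range]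
          simp only [Function.comp_apply, decide_eq_true_eq]
      _ = ∑ j ∈ Finset.range m, ∑ i ∈ Finset.range q,
            if j + 1 ≤ abar q s (i + 1) then 1 else 0 := by
          refine Finset.sum_congr rfl fun j _ => ?_
          by_cases h : j < L
          · rw [if_pos h]
          · rw [if_neg h]
            refine (Finset.sum_eq_zero fun i hi => ?_).symm
            rw [Finset.mem_range] at hi
            rw [if_neg]
            have := abar_le q s (i + 1) (by omega) (by omega)
            omega
      _ = ∑ i ∈ Finset.range q, ∑ j ∈ Finset.range m,
            if j + 1 ≤ abar q s (i + 1) then 1 else 0 := Finset.sum_comm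
      _ = ∑ i ∈ Finset.range q, min (abar q s (i + 1)) m := by
          refine Finset.sum_congr rfl fun i _ => ?_
          rw [← Finset.card_filter]
          have : (Finset.range m).filter (fun j => j + 1 ≤ abar q s (i + 1))
              = Finset.range (min (abar q s (i + 1)) m) := by
            ext j; simp only [Finset.mem_filter, Finset.mem_range]; omega
          rw [this, Finset.card_range]
      _ = ∑ i ∈ Finset.Icc 1 q, min (abar q s i) m := (sum_Icc_one q (fun i => min (abar q s i) m)).symm
  rw [hLHS]
  -- RHS
  have hRHS : ∀ k ∈ Finset.Icc 1 L, (stairSeq q s).getD (k - 1) 0 - (k - m)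
      = ∑ i ∈ Finset.Icc 1 q, if i ≤ (stairSeq q s).getD (k - 1) 0 ∧ k - m < i
          then 1 else 0 := by
    intro k hk
    rw [Finset.mem_Icc] at hk
    rw [← Finset.card_filter]
    have hdq := stair_le_q q s k hk.1
    have : (Finset.Icc 1 q).filter
        (fun i => i ≤ (stairSeq q s).getD (k - 1) 0 ∧ k - m < i)
        = Finset.Icc (k - m + 1) ((stairSeq q s).getD (k - 1) 0) := by
      ext i; simp only [Finset.mem_filter, Finset.mem_Icc]; omega
    rw [this, Nat.card_Icc]
    omega
  rw [Finset.sum_congr rfl hRHS, Finset.sum_comm]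
  refine Finset.sum_congr rfl fun i hi => ?_
  rw [Finset.mem_Icc] at hi
  set B := q + ∑ t ∈ Finset.Icc i q, s t with hBdef
  have hBL : B ≤ L := by
    have h : ∑ t ∈ Finset.Icc i q, s t ≤ ∑ t ∈ Finset.Icc 1 q, s t :=
      Finset.sum_le_sum_of_subset (Finset.Icc_subset_Icc hi.1 le_rfl)
    omega
  rw [← Finset.card_filter]
  have hset : (Finset.Icc 1 L).filter
      (fun k => i ≤ (stairSeq q s).getD (k - 1) 0 ∧ k - m < i)
      = Finset.Icc i (min B (m + i - 1)) := by
    ext k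
    simp only [Finset.mem_filter, Finset.mem_Icc]
    constructor
    · rintro ⟨⟨hk1, hkL⟩, hd, hkm⟩
      have h2 := (stair_getD q s i k hi.1 hk1).mp hd
      have := h2.2.1
      have := h2.2.2
      omega
    · rintro ⟨h1, h2⟩
      have hk1 : 1 ≤ k := le_trans hi.1 h1
      have hkB : k ≤ B := by omega
      exact ⟨⟨hk1, le_trans hkB hBL⟩,
        (stair_getD q s i k hi.1 hk1).mpr ⟨hi.2, h1, hkB⟩, by omega⟩
  rw [hset, Nat.card_Icc]
  unfold abar
  omega

/-- Proposition 8: if `δ(α) = (1, …, q, q^{(s_q)}, …, 1^{(s_1)})`, then `ᾱ ≻ α ≻ α̲`,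
where `α̲ = ᾱ*` and `≻` denotes majorization (comparison of all partial sums). -/
theorem abar_majorizes_and_majorizes_aunder (n q : ℕ) (hq : 1 ≤ q) (s : ℕ → ℕ)
    (α : List ℕ) (hα : IsPartition n α)
    (hdiag : ∀ k, 1 ≤ k → diag α k = (stairSeq q s).getD (k - 1) 0) :
    ∀ k : ℕ, (α.take k).sum ≤ ((abarList q s).take k).sum ∧
      ((conjList (abarList q s)).take k).sum ≤ (α.take k).sum := by
  intro m
  have hcell : ∀ i, 1 ≤ i → 1 ≤ part α i →
      part α i + i - 1 ≤ q + ∑ t ∈ Finset.Icc 1 q, s t := by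
    intro i hi hp
    have hk0 : 1 ≤ part α i + i - 1 := by omega
    have h1 : 1 ≤ diag α (part α i + i - 1) := by
      rw [diag]
      exact Finset.card_pos.mpr
        ⟨i, Finset.mem_filter.mpr ⟨Finset.mem_Icc.mpr ⟨hi, by omega⟩, le_rfl⟩⟩
    rw [hdiag _ hk0] at h1
    exact ((stair_getD q s 1 _ le_rfl hk0).mp h1).2.2
  have hpart : ∀ i, 1 ≤ i →
      part α i = ∑ k ∈ Finset.Icc 1 (q + ∑ t ∈ Finset.Icc 1 q, s t),
        if i ≤ k ∧ k ≤ part α i + i - 1 then 1 else 0 := by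
    intro i hi
    rw [← Finset.card_filter]
    by_cases hp : 1 ≤ part α i
    · have hL := hcell i hi hp
      have hset : (Finset.Icc 1 (q + ∑ t ∈ Finset.Icc 1 q, s t)).filter
          (fun k => i ≤ k ∧ k ≤ part α i + i - 1) = Finset.Icc i (part α i + i - 1) := by
        ext k; simp only [Finset.mem_filter, Finset.mem_Icc]; omega
      rw [hset, Nat.card_Icc]; omega
    · have hset : (Finset.Icc 1 (q + ∑ t ∈ Finset.Icc 1 q, s t)).filter
          (fun k => i ≤ k ∧ k ≤ part α i + i - 1) = ∅ := by
        rw [Finset.filter_eq_empty_iff]; intro k _; omega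
      rw [hset, Finset.card_empty]; omega
  have hmain : (α.take m).sum = ∑ k ∈ Finset.Icc 1 (q + ∑ t ∈ Finset.Icc 1 q, s t),
      ((Finset.Icc 1 m).filter (fun i => i ≤ k ∧ k ≤ part α i + i - 1)).card := by
    calc (α.take m).sum = ∑ i ∈ Finset.range m, α.getD i 0 := take_sum α m
      _ = ∑ i ∈ Finset.Icc 1 m, part α i := by
          rw [sum_Icc_one m (part α)]
          refine Finset.sum_congr rfl fun i _ => ?_
          simp [part]
      _ = ∑ i ∈ Finset.Icc 1 m, ∑ k ∈ Finset.Icc 1 (q + ∑ t ∈ Finset.Icc 1 q, s t),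
            if i ≤ k ∧ k ≤ part α i + i - 1 then 1 else 0 :=
          Finset.sum_congr rfl fun i hi => hpart i (Finset.mem_Icc.mp hi).1
      _ = ∑ k ∈ Finset.Icc 1 (q + ∑ t ∈ Finset.Icc 1 q, s t), ∑ i ∈ Finset.Icc 1 m,
            if i ≤ k ∧ k ≤ part α i + i - 1 then 1 else 0 := Finset.sum_comm
      _ = _ := Finset.sum_congr rfl fun k _ => (Finset.card_filter _ _).symm
  constructor
  · rw [hmain, sumA q s m]
    refine Finset.sum_le_sum fun k hk => ?_
    rw [Finset.mem_Icc] at hk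
    rw [← hdiag k hk.1]
    refine le_min ?_ ?_
    · simp only [diag]
      refine Finset.card_le_card ?_
      intro i hi
      simp only [Finset.mem_filter, Finset.mem_Icc] at *
      omega
    · exact (Finset.card_filter_le _ _).trans (by rw [Nat.card_Icc]; omega)
  · rw [hmain, sumB q s hq m]
    refine Finset.sum_le_sum fun k hk => ?_
    rw [Finset.mem_Icc] at hk
    rw [← hdiag k hk.1]
    have hsub : (Finset.Icc 1 k).filter (fun i => k ≤ part α i + i - 1) ⊆
        ((Finset.Icc 1 m).filter (fun i => i ≤ k ∧ k ≤ part α i + i - 1)) ∪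
          Finset.Icc (m + 1) k := by
      intro i hi
      simp only [Finset.mem_filter, Finset.mem_Icc, Finset.mem_union] at *
      omega
    have hcard := (Finset.card_le_card hsub).trans (Finset.card_union_le _ _)
    rw [Nat.card_Icc] at hcard
    simp only [diag] at hcard ⊢
    omega
end

section
/- If M is a set of t consecutive integers (each with multiplicity one), with t ≥ 1, then the number of vn-arrangements of M equals 2^{t−1}. -/
/-- Insert `y` immediately after the first occurrence of `x`. -/
def insAfter (x y : ℤ) : List ℤ → List ℤ
  | [] => []
  | a :: l => if a = x then a :: y :: l else a :: insAfter x y l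

lemma insAfter_cons (x y a : ℤ) (l : List ℤ) :
    insAfter x y (a :: l) = if a = x then a :: y :: l else a :: insAfter x y l := rfl

lemma insAfter_head? (x y : ℤ) (l : List ℤ) : (insAfter x y l).head? = l.head? := by
  cases l with
  | nil => rfl
  | cons a l => rw [insAfter_cons]; split <;> rfl

lemma coe_insAfter (x y : ℤ) {l : List ℤ} (h : x ∈ l) :
    (↑(insAfter x y l) : Multiset ℤ) = y ::ₘ ↑l := by
  induction l with
  | nil => simp at h
  | cons a l ih =>
    rw [insAfter_cons]
    by_cases ha : a = x
    · rw [if_pos ha]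
      exact Quot.sound (List.Perm.swap _ _ _)
    · rw [if_neg ha]
      have hx : x ∈ l := (List.mem_cons.mp h).resolve_left (fun hh => ha hh.symm)
      rw [← Multiset.cons_coe, ← Multiset.cons_coe, ih hx, Multiset.cons_swap]

lemma insAfter_erase {x y : ℤ} (hxy : x ≠ y) {l : List ℤ} (h : y ∉ l) :
    (insAfter x y l).erase y = l := by
  induction l with
  | nil => rfl
  | cons a l ih =>
    have hay : a ≠ y := fun hh => h (hh ▸ List.mem_cons_self)
    have hyl : y ∉ l := fun hh => h (List.mem_cons_of_mem a hh)
    rw [insAfter_cons]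
    by_cases ha : a = x
    · rw [if_pos ha, List.erase_cons_tail (by simpa using hay), List.erase_cons_head]
    · rw [if_neg ha, List.erase_cons_tail (by simpa using hay), ih hyl]

lemma chain'_insAfter {R : ℤ → ℤ → Prop} {x y : ℤ} {l : List ℤ}
    (hc : l.Chain' R) (hxy : R x y) (h : ∀ z, R x z → R y z) :
    (insAfter x y l).Chain' R := by
  induction l with
  | nil => exact List.isChain_nil
  | cons a l ih =>
    unfold List.Chain' at hc ⊢
    rw [List.isChain_cons] at hc
    rw [insAfter_cons]
    by_cases ha : a = x
    · subst ha
      rw [if_pos rfl, List.isChain_cons, List.isChain_cons]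
      exact ⟨by simp [hxy], fun b hb => h b (hc.1 b hb), hc.2⟩
    · rw [if_neg ha, List.isChain_cons, insAfter_head?]
      exact ⟨hc.1, ih hc.2⟩

lemma insAfter_append {x y : ℤ} {l₁ l₂ : List ℤ} (h : x ∉ l₁) :
    insAfter x y (l₁ ++ x :: l₂) = l₁ ++ x :: y :: l₂ := by
  induction l₁ with
  | nil => simp [insAfter_cons]
  | cons a l ih =>
    have hax : a ≠ x := fun hh => h (hh ▸ List.mem_cons_self)
    rw [List.cons_append, insAfter_cons, if_neg hax, ih (fun hh => h (List.mem_cons_of_mem a hh)),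
      List.cons_append]

/-- In a vn-chain, the maximum `M` (occurring and not at the head) is immediately
preceded by `M - 1`. -/
lemma find_pred {M : ℤ} : ∀ {l : List ℤ}, l.Chain' (fun u v => v ≤ u + 1) → M ∈ l →
    (∀ z ∈ l, z ≤ M) → l.Nodup → l.head? ≠ some M →
    ∃ l₁ l₂, l = l₁ ++ (M - 1) :: M :: l₂ ∧ (M - 1) ∉ l₁ := by
  intro l
  induction l with
  | nil => intro _ hM; simp at hM
  | cons a l ih =>
    intro hc hM hb hnd hh
    have haM : a ≠ M := by simpa using hh
    have hMl : M ∈ l := (List.mem_cons.mp hM).resolve_left (fun hh' => haM hh'.symm)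
    cases l with
    | nil => simp at hMl
    | cons b l' =>
      by_cases hbM : b = M
      · have h1 : M ≤ a + 1 := by
          have := List.isChain_cons_cons.mp hc
          rw [hbM] at this
          exact this.1
        have h2 : a ≤ M := hb a (List.mem_cons_self)
        have ha : a = M - 1 := by omega
        exact ⟨[], l', by rw [ha, hbM]; simp, by simp⟩
      · obtain ⟨l₁, l₂, hdec, hnm⟩ := ih (List.isChain_cons_cons.mp hc).2
          hMl (fun z hz => hb z (List.mem_cons_of_mem a hz)) (List.nodup_cons.mp hnd).2
          (by simpa using fun hh' => hbM hh')
        refine ⟨a :: l₁, l₂, by rw [hdec]; rfl, ?_⟩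
        intro hmem
        rcases List.mem_cons.mp hmem with h1 | h1
        · have : (M - 1) ∈ b :: l' := by rw [hdec]; simp
          exact (List.nodup_cons.mp hnd).1 (h1 ▸ this)
        · exact hnm h1

lemma norm_coe (t : ℕ) (a : ℤ) :
    (Multiset.range t).map (fun i => a + i) =
      (Multiset.range t).map (fun i : ℕ => a + (i : ℤ)) := by
  simp only [Multiset.pure_def, Multiset.bind_def, Multiset.bind, Multiset.map_join,
    Multiset.map_map, Function.comp_apply, Multiset.map_singleton]
  induction t with
  | zero => simp
  | succ n ih => rw [Multiset.range_succ]; simp [ih]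

lemma range_succ_map (n : ℕ) (a : ℤ) : (Multiset.range (n+1)).map (fun i : ℕ => a + (i:ℤ)) =
    (a + n) ::ₘ (Multiset.range n).map (fun i : ℕ => a + (i:ℤ)) := by
  rw [Multiset.range_succ, Multiset.map_cons]

lemma mem_bound {n : ℕ} {a : ℤ} {l : List ℤ}
    (hm : (↑l : Multiset ℤ) = (Multiset.range n).map (fun i : ℕ => a + (i:ℤ)))
    {z : ℤ} (hz : z ∈ l) : z ≤ a + n - 1 := by
  have : z ∈ (Multiset.range n).map (fun i : ℕ => a + (i:ℤ)) := by
    rw [← hm]; exact hz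
  obtain ⟨i, hi, rfl⟩ := Multiset.mem_map.mp this
  rw [Multiset.mem_range] at hi
  have : (i : ℤ) < (n : ℤ) := by exact_mod_cast hi
  omega

lemma basic_facts {n : ℕ} (hn : 1 ≤ n) {a : ℤ} {l : List ℤ}
    (hm : (↑l : Multiset ℤ) = (Multiset.range n).map (fun i : ℕ => a + (i:ℤ))) :
    a + n - 1 ∈ l ∧ l ≠ [] ∧ l.Nodup := by
  have h1 : a + n - 1 ∈ l := by
    have : a + n - 1 ∈ (Multiset.range n).map (fun i : ℕ => a + (i:ℤ)) := by
      refine Multiset.mem_map.mpr ⟨n - 1, Multiset.mem_range.mpr (by omega), ?_⟩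
      have : ((n - 1 : ℕ) : ℤ) = (n : ℤ) - 1 := by omega
      rw [this]; ring
    rw [← hm] at this; exact this
  refine ⟨h1, fun hl => by simp [hl] at h1, ?_⟩
  have : (↑l : Multiset ℤ).Nodup := by
    rw [hm]
    exact (Multiset.nodup_range n).map (fun i j h => by omega)
  exact Multiset.coe_nodup.mp this

lemma finite_S (s : Multiset ℤ) (P : List ℤ → Prop) :
    {l : List ℤ | (↑l : Multiset ℤ) = s ∧ P l}.Finite := by
  apply (s.toList.permutations.finite_toSet).subset
  rintro l ⟨hm, -⟩
  have : (↑l : Multiset ℤ) = ↑s.toList := by rw [hm, Multiset.coe_toList]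
  exact List.mem_permutations.mpr (Multiset.coe_eq_coe.mp this)

/-- If `M` is a set of `t ≥ 1` consecutive integers (each with multiplicity one), then the
number of vn-arrangements of `M` equals `2^(t-1)`. -/
theorem card_vn_arrangements_consecutive (t : ℕ) (ht : 1 ≤ t) (a : ℤ) :
    {l : List ℤ | (↑l : Multiset ℤ) = (Multiset.range t).map (fun i => a + i) ∧
        l.Chain' fun x y => y ≤ x + 1}.ncard = 2 ^ (t - 1) := by
  simp only [norm_coe]
  induction t, ht using Nat.le_induction with
  | base =>
    have : {l : List ℤ | (↑l : Multiset ℤ) = (Multiset.range 1).map (fun i : ℕ => a + (i:ℤ)) ∧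
        l.Chain' fun x y => y ≤ x + 1} = {[a]} := by
      ext l
      simp only [Set.mem_setOf_eq, Set.mem_singleton_iff, Multiset.range_succ,
        Multiset.range_zero, Multiset.map_cons, Nat.cast_zero, add_zero, Multiset.map_zero]
      constructor
      · rintro ⟨hm, -⟩
        exact Multiset.coe_eq_singleton.mp hm
      · rintro rfl
        exact ⟨rfl, List.isChain_singleton a⟩
    rw [this, Set.ncard_singleton]
    simp
  | succ n hn IH =>
    set M : ℤ := a + n with hM
    set A : Set (List ℤ) := {l : List ℤ |
        (↑l : Multiset ℤ) = (Multiset.range n).map (fun i : ℕ => a + (i:ℤ)) ∧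
        l.Chain' fun x y => y ≤ x + 1} with hA
    have hAfacts : ∀ l ∈ A, (∀ z ∈ l, z ≤ M - 1) ∧ M ∉ l ∧ M - 1 ∈ l ∧ l ≠ [] ∧ l.Nodup := by
      rintro l ⟨hm, -⟩
      obtain ⟨h1, h2, h3⟩ := basic_facts hn hm
      have hb : ∀ z ∈ l, z ≤ M - 1 := fun z hz => by
        have := mem_bound hm hz; omega
      exact ⟨hb, fun hMl => by have := hb M hMl; omega, h1, h2, h3⟩
    have hSeq : {l : List ℤ |
          (↑l : Multiset ℤ) = (Multiset.range (n+1)).map (fun i : ℕ => a + (i:ℤ)) ∧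
          l.Chain' fun x y => y ≤ x + 1} =
        (fun l => M :: l) '' A ∪ (fun l => insAfter (M-1) M l) '' A := by
      ext l
      simp only [Set.mem_setOf_eq, Set.mem_union, Set.mem_image]
      constructor
      · rintro ⟨hm, hc⟩
        rw [range_succ_map] at hm
        have hb : ∀ z ∈ l, z ≤ M := by
          intro z hz
          have := mem_bound (n := n + 1) (a := a) (by rw [hm, ← range_succ_map]) hz
          push_cast at this ⊢
          omega
        have hMem : M ∈ l := by
          have : M ∈ (↑l : Multiset ℤ) := by rw [hm]; exact Multiset.mem_cons_self _ _
          simpa using this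
        have hnd : l.Nodup := by
          have : (↑l : Multiset ℤ).Nodup := by
            rw [hm, ← range_succ_map]
            exact (Multiset.nodup_range (n+1)).map (fun i j h => by omega)
          exact Multiset.coe_nodup.mp this
        cases l with
        | nil => simp at hMem
        | cons h tl =>
          by_cases hh : h = M
          · subst hh
            refine Or.inl ⟨tl, ⟨?_, hc.tail⟩, rfl⟩
            rw [← Multiset.cons_inj_right M, Multiset.cons_coe]
            exact hm
          · obtain ⟨l₁, l₂, hdec, hnm⟩ := find_pred hc hMem hb hnd
              (by simpa using fun hh' => hh hh')
            refine Or.inr ⟨l₁ ++ (M - 1) :: l₂, ⟨?_, ?_⟩, ?_⟩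
            · have hMem' : M - 1 ∈ l₁ ++ (M - 1) :: l₂ := by simp
              have := coe_insAfter (M - 1) M hMem'
              rw [insAfter_append hnm, ← hdec, hm, Multiset.cons_inj_right] at this
              exact this.symm
            · rw [hdec] at hc
              unfold List.Chain' at hc ⊢
              rw [List.isChain_append] at hc ⊢
              obtain ⟨c1, c2, c3⟩ := hc
              refine ⟨c1, ?_, fun x hx y hy => c3 x hx y (by simpa using hy)⟩
              rw [List.isChain_cons] at c2 ⊢
              refine ⟨?_, c2.2.tail⟩
              intro y hy
              have hyl : y ∈ h :: tl := by
                rw [hdec]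
                exact List.mem_append_right _ (List.mem_cons_of_mem _
                  (List.mem_cons_of_mem _ (List.mem_of_mem_head? hy)))
              have := hb y hyl
              omega
            · rw [insAfter_append hnm, ← hdec]
      · rintro (⟨u, hu, rfl⟩ | ⟨u, hu, rfl⟩)
        · obtain ⟨hbu, -, -, -, -⟩ := hAfacts u hu
          refine ⟨?_, ?_⟩
          · rw [range_succ_map, ← Multiset.cons_coe, hu.1]
          · unfold List.Chain'
            rw [List.isChain_cons]
            refine ⟨fun y hy => ?_, hu.2⟩
            have := hbu y (List.mem_of_mem_head? hy)
            omega
        · obtain ⟨hbu, hMnu, hM1u, -, -⟩ := hAfacts u hu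
          refine ⟨?_, ?_⟩
          · rw [coe_insAfter (M - 1) M hM1u, hu.1, range_succ_map]
          · exact chain'_insAfter hu.2 (by omega) (fun z hz => by omega)
    have hAfin : A.Finite := finite_S _ _
    have hdisj : Disjoint ((fun l => M :: l) '' A) ((fun l => insAfter (M-1) M l) '' A) := by
      rw [Set.disjoint_left]
      rintro x ⟨u, hu, rfl⟩ ⟨v, hv, hev⟩
      obtain ⟨hbv, -, -, hvne, -⟩ := hAfacts v hv
      have := congrArg List.head? hev
      rw [insAfter_head?] at this
      cases v with
      | nil => exact hvne rfl
      | cons c v' =>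
        have hc : c ≤ M - 1 := hbv c (List.mem_cons_self)
        simp only [List.head?_cons, Option.some.injEq] at this
        omega
    have hinj1 : Set.InjOn (fun l => M :: l) A := fun u _ v _ h => by
      simpa using h
    have hinj2 : Set.InjOn (fun l => insAfter (M-1) M l) A := by
      intro u hu v hv h
      obtain ⟨-, hMnu, -, -, -⟩ := hAfacts u hu
      obtain ⟨-, hMnv, -, -, -⟩ := hAfacts v hv
      have := congrArg (fun l => List.erase l M) h
      simpa only [insAfter_erase (by omega : M - 1 ≠ M) hMnu,
        insAfter_erase (by omega : M - 1 ≠ M) hMnv] using this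
    rw [hSeq, Set.ncard_union_eq hdisj (hAfin.image _) (hAfin.image _),
      Set.ncard_image_of_injOn hinj1, Set.ncard_image_of_injOn hinj2, IH]
    have h2 : 2 ^ (n - 1) + 2 ^ (n - 1) = 2 ^ n := by
      rw [← two_mul, ← pow_succ']
      congr 1
      omega
    rw [h2]
    congr 1
end

section
/- Let M = {0^{(b_0)}, 1^{(b_1)}, …, t^{(b_t)}} be a multiset with b_i copies of i for 0 ≤ i ≤ t, and let k ≥ 0. Then the number of k-vn-arrangements of M equals the multinomial coefficient (b_0 + b_1 + … + b_k)! / (b_0! b_1! … b_k!) times the product ∏_{i=1}^{t−k} C(b_i + b_{i+1} + … + b_{i+k}, b_{i+k}), where an empty product has value 1 and, if t < k, the multinomial factor is taken over all of b_0,…,b_t. -/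
set_option maxHeartbeats 1000000

namespace VN

def ins (t k : ℕ) : List ℕ → List ℕ → List ℕ
  | _, [] => []
  | cs, x :: xs =>
    if t ≤ x + k then x :: (List.replicate cs.headI t ++ ins t k cs.tail xs)
    else x :: ins t k cs xs

def g (t k : ℕ) (p : List ℕ × List ℕ) : List ℕ :=
  List.replicate p.2.headI t ++ ins t k p.2.tail p.1

lemma ins_nil (t k : ℕ) (cs : List ℕ) : ins t k cs [] = [] := rfl

lemma ins_cons (t k : ℕ) (cs : List ℕ) (x : ℕ) (xs : List ℕ) :
    ins t k cs (x :: xs) =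
      if t ≤ x + k then x :: (List.replicate cs.headI t ++ ins t k cs.tail xs)
      else x :: ins t k cs xs := rfl

lemma head?_ins (t k : ℕ) (cs l' : List ℕ) : (ins t k cs l').head? = l'.head? := by
  cases l' with
  | nil => rfl
  | cons x xs => rw [ins_cons]; split <;> rfl

lemma headI_cons_tail {l : List ℕ} (h : l ≠ []) : l.headI :: l.tail = l := by
  cases l with
  | nil => exact absurd rfl h
  | cons a l => rfl

lemma sum_headI_tail {l : List ℕ} (h : l ≠ []) : l.headI + l.tail.sum = l.sum := by
  conv_rhs => rw [← headI_cons_tail h]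
  rw [List.sum_cons]

lemma eq_of_mem_getLast?_replicate {a t c : ℕ} (h : a ∈ (List.replicate c t).getLast?) :
    a = t := by
  obtain ⟨h1, h2⟩ := List.mem_getLast?_eq_getLast h
  rw [h2]
  exact List.eq_of_mem_replicate (List.getLast_mem _)

lemma coe_ins (t k : ℕ) : ∀ (l' cs : List ℕ),
    cs.length = l'.countP (fun x => decide (t ≤ x + k)) →
    (↑(ins t k cs l') : Multiset ℕ) = ↑l' + Multiset.replicate cs.sum t
  | [], cs, h => by
    simp only [List.countP_nil] at h
    rw [List.length_eq_zero_iff] at h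
    subst h; simp [ins_nil]
  | x :: xs, cs, h => by
    by_cases hb : t ≤ x + k
    · obtain ⟨c, cs', rfl⟩ : ∃ c cs', cs = c :: cs' := by
        cases cs with
        | nil => simp [List.countP_cons, hb] at h
        | cons c cs' => exact ⟨c, cs', rfl⟩
      have h' : cs'.length = xs.countP (fun x => decide (t ≤ x + k)) := by
        simp [List.countP_cons, hb] at h
        omega
      have ih := coe_ins t k xs cs' h'
      simp only [ins_cons, if_pos hb, List.headI_cons, List.tail_cons, ← Multiset.cons_coe,
        ← Multiset.coe_add, Multiset.coe_replicate, ih, List.sum_cons,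
        Multiset.replicate_add, ← Multiset.singleton_add]
      abel
    · have h' : cs.length = xs.countP (fun x => decide (t ≤ x + k)) := by
        simp [List.countP_cons, hb] at h
        omega
      have ih := coe_ins t k xs cs h'
      simp only [ins_cons, if_neg hb, ← Multiset.cons_coe, ih, ← Multiset.singleton_add]
      abel

lemma chain'_ins (t k : ℕ) : ∀ (l' : List ℕ), l'.Chain' (fun x y => y ≤ x + k) →
    (∀ x ∈ l', x < t) → ∀ (cs : List ℕ) (c : ℕ),
    (List.replicate c t ++ ins t k cs l').Chain' (fun x y => y ≤ x + k)
  | [], _, _, cs, c => by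
    rw [ins_nil, List.append_nil]
    exact List.isChain_replicate_of_rel c (Nat.le_add_right t k)
  | x :: xs, hch, helt, cs, c => by
    have hxt : x < t := helt x (List.mem_cons_self)
    have hch' := List.isChain_cons.mp hch
    have helt' : ∀ y ∈ xs, y < t := fun y hy => helt y (List.mem_cons_of_mem x hy)
    by_cases hb : t ≤ x + k
    · rw [ins_cons, if_pos hb]
      apply List.isChain_append.mpr
      refine ⟨List.isChain_replicate_of_rel c (Nat.le_add_right t k), ?_, ?_⟩
      · apply List.isChain_cons.mpr
        refine ⟨?_, chain'_ins t k xs hch'.2 helt' cs.tail cs.headI⟩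
        intro y hy
        cases hc2 : cs.headI with
        | zero =>
          rw [hc2, List.replicate_zero, List.nil_append, head?_ins] at hy
          exact hch'.1 y hy
        | succ c2 =>
          rw [hc2, List.replicate_succ, List.cons_append, List.head?_cons,
            Option.mem_some_iff] at hy
          omega
      · intro a ha y hy
        rw [List.head?_cons, Option.mem_some_iff] at hy
        have ha' : a = t := eq_of_mem_getLast?_replicate ha
        omega
    · rw [ins_cons, if_neg hb]
      apply List.isChain_append.mpr
      refine ⟨List.isChain_replicate_of_rel c (Nat.le_add_right t k), ?_, ?_⟩
      · apply List.isChain_cons.mpr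
        refine ⟨?_, by simpa [List.Chain'] using chain'_ins t k xs hch'.2 helt' cs 0⟩
        intro y hy
        rw [head?_ins] at hy
        exact hch'.1 y hy
      · intro a ha y hy
        rw [List.head?_cons, Option.mem_some_iff] at hy
        have ha' : a = t := eq_of_mem_getLast?_replicate ha
        omega

lemma filter_replicate_t (t c : ℕ) :
    (List.replicate c t).filter (fun x => decide (x < t)) = [] := by
  induction c with
  | zero => rfl
  | succ c ih => rw [List.replicate_succ, List.filter_cons]; simp [ih]

lemma filter_ins (t k : ℕ) : ∀ (l' cs : List ℕ), (∀ x ∈ l', x < t) →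
    (ins t k cs l').filter (fun x => decide (x < t)) = l'
  | [], cs, _ => rfl
  | x :: xs, cs, helt => by
    have hxt : x < t := helt x (List.mem_cons_self)
    have helt' : ∀ y ∈ xs, y < t := fun y hy => helt y (List.mem_cons_of_mem x hy)
    by_cases hb : t ≤ x + k
    · rw [ins_cons, if_pos hb, List.filter_cons, List.filter_append, filter_replicate_t,
        List.nil_append, filter_ins t k xs cs.tail helt']
      simp [hxt]
    · rw [ins_cons, if_neg hb, List.filter_cons, filter_ins t k xs cs helt']
      simp [hxt]

lemma filter_g (t k : ℕ) (l' cs : List ℕ) (helt : ∀ x ∈ l', x < t) :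
    (g t k (l', cs)).filter (fun x => decide (x < t)) = l' := by
  rw [g, List.filter_append, filter_replicate_t, List.nil_append, filter_ins t k l' _ helt]

lemma rep_cancel (t : ℕ) : ∀ (c1 c2 : ℕ) (L1 L2 : List ℕ),
    (∀ y ∈ L1.head?, y ≠ t) → (∀ y ∈ L2.head?, y ≠ t) →
    List.replicate c1 t ++ L1 = List.replicate c2 t ++ L2 → c1 = c2 ∧ L1 = L2 := by
  intro c1
  induction c1 with
  | zero =>
    intro c2 L1 L2 h1 h2 heq
    cases c2 with
    | zero => simpa using heq
    | succ c2 =>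
      rw [List.replicate_zero, List.nil_append, List.replicate_succ, List.cons_append] at heq
      exfalso
      exact h1 t (by rw [heq]; rfl) rfl
  | succ c1 ih =>
    intro c2 L1 L2 h1 h2 heq
    cases c2 with
    | zero =>
      rw [List.replicate_zero, List.nil_append, List.replicate_succ, List.cons_append] at heq
      exfalso
      exact h2 t (by rw [← heq]; rfl) rfl
    | succ c2 =>
      rw [List.replicate_succ, List.replicate_succ, List.cons_append, List.cons_append,
        List.cons.injEq] at heq
      obtain ⟨h3, h4⟩ := ih c2 L1 L2 h1 h2 heq.2
      exact ⟨by omega, h4⟩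

lemma head?_ins_ne_t (t k : ℕ) (cs l' : List ℕ) (helt : ∀ x ∈ l', x < t) :
    ∀ y ∈ (ins t k cs l').head?, y ≠ t := by
  intro y hy
  rw [head?_ins] at hy
  have := helt y (List.mem_of_mem_head? hy)
  omega

lemma ins_inj (t k : ℕ) : ∀ (l' cs1 cs2 : List ℕ), (∀ x ∈ l', x < t) →
    cs1.length = l'.countP (fun x => decide (t ≤ x + k)) →
    cs2.length = l'.countP (fun x => decide (t ≤ x + k)) →
    ins t k cs1 l' = ins t k cs2 l' → cs1 = cs2
  | [], cs1, cs2, _, h1, h2, _ => by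
    simp only [List.countP_nil] at h1 h2
    rw [List.length_eq_zero_iff] at h1 h2
    rw [h1, h2]
  | x :: xs, cs1, cs2, helt, h1, h2, heq => by
    have helt' : ∀ y ∈ xs, y < t := fun y hy => helt y (List.mem_cons_of_mem x hy)
    by_cases hb : t ≤ x + k
    · obtain ⟨c1, cs1', rfl⟩ : ∃ c cs', cs1 = c :: cs' := by
        cases cs1 with
        | nil => simp [List.countP_cons, hb] at h1
        | cons c cs' => exact ⟨c, cs', rfl⟩
      obtain ⟨c2, cs2', rfl⟩ : ∃ c cs', cs2 = c :: cs' := by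
        cases cs2 with
        | nil => simp [List.countP_cons, hb] at h2
        | cons c cs' => exact ⟨c, cs', rfl⟩
      rw [ins_cons, ins_cons, if_pos hb, if_pos hb, List.cons.injEq] at heq
      simp only [List.headI_cons, List.tail_cons] at heq
      obtain ⟨hc, hrest⟩ := rep_cancel t c1 c2 _ _
        (head?_ins_ne_t t k cs1' xs helt') (head?_ins_ne_t t k cs2' xs helt') heq.2
      have h1' : cs1'.length = xs.countP (fun x => decide (t ≤ x + k)) := by
        simp [List.countP_cons, hb] at h1; omega
      have h2' : cs2'.length = xs.countP (fun x => decide (t ≤ x + k)) := by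
        simp [List.countP_cons, hb] at h2; omega
      rw [hc, ins_inj t k xs cs1' cs2' helt' h1' h2' hrest]
    · rw [ins_cons, ins_cons, if_neg hb, if_neg hb, List.cons.injEq] at heq
      have h1' : cs1.length = xs.countP (fun x => decide (t ≤ x + k)) := by
        simp [List.countP_cons, hb] at h1; omega
      have h2' : cs2.length = xs.countP (fun x => decide (t ≤ x + k)) := by
        simp [List.countP_cons, hb] at h2; omega
      exact ins_inj t k xs cs1 cs2 helt' h1' h2' heq.2

lemma g_surj (t k : ℕ) : ∀ (l : List ℕ), l.Chain' (fun x y => y ≤ x + k) →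
    (∀ x ∈ l, x = t ∨ x < t) →
    ∃ cs : List ℕ,
      cs.length = (l.filter (fun x => decide (x < t))).countP (fun x => decide (t ≤ x + k)) + 1 ∧
      cs.sum = l.count t ∧ g t k (l.filter (fun x => decide (x < t)), cs) = l
  | [], _, _ => ⟨[0], by simp, by simp, rfl⟩
  | x :: xs, hch, helt => by
    have hch' := List.isChain_cons.mp hch
    have helt' : ∀ y ∈ xs, y = t ∨ y < t := fun y hy => helt y (List.mem_cons_of_mem x hy)
    obtain ⟨cs, hlen, hsum, hg⟩ := g_surj t k xs hch'.2 helt'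
    obtain ⟨c, cs', rfl⟩ : ∃ c cs', cs = c :: cs' := by
      cases cs with
      | nil => simp at hlen
      | cons c cs' => exact ⟨c, cs', rfl⟩
    rcases helt x (List.mem_cons_self) with hx | hx
    · -- x = t
      have hfil : (x :: xs).filter (fun y => decide (y < t)) =
          xs.filter (fun y => decide (y < t)) := by
        rw [List.filter_cons, if_neg (by simp [hx])]
      refine ⟨(c + 1) :: cs', ?_, ?_, ?_⟩
      · rw [hfil]; simpa using hlen
      · rw [List.sum_cons, hx, List.count_cons_self]
        rw [List.sum_cons] at hsum
        omega
      · rw [hfil]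
        show List.replicate (c + 1) t ++ ins t k cs'
            (xs.filter fun y => decide (y < t)) = x :: xs
        rw [List.replicate_succ, List.cons_append, hx]
        exact congrArg (t :: ·) hg
    · -- x < t
      have hfil : (x :: xs).filter (fun y => decide (y < t)) =
          x :: xs.filter (fun y => decide (y < t)) := by
        rw [List.filter_cons, if_pos (by simpa using hx)]
      by_cases hb : t ≤ x + k
      · refine ⟨0 :: c :: cs', ?_, ?_, ?_⟩
        · rw [hfil, List.countP_cons]
          simp [hb]
          simp only [List.length_cons] at hlen
          omega
        · rw [List.sum_cons, List.count_cons_of_ne (by omega)]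
          simpa using hsum
        · rw [hfil]
          show List.replicate 0 t ++ ins t k (c :: cs')
              (x :: (xs.filter fun y => decide (y < t))) = x :: xs
          rw [List.replicate_zero, List.nil_append, ins_cons, if_pos hb]
          show x :: (List.replicate c t ++ ins t k cs'
              (xs.filter fun y => decide (y < t))) = x :: xs
          exact congrArg (x :: ·) hg
      · -- x small: c must be 0
        have hc0 : c = 0 := by
          by_contra hc
          obtain ⟨c', rfl⟩ : ∃ c', c = c' + 1 := ⟨c - 1, by omega⟩
          rw [g] at hg
          simp only [List.headI_cons, List.tail_cons, List.replicate_succ,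
            List.cons_append] at hg
          have hmem : (t : ℕ) ∈ xs.head? := by rw [← hg]; rfl
          have := hch'.1 t hmem
          omega
        subst hc0
        have hxs : ins t k cs' (xs.filter (fun y => decide (y < t))) = xs := by
          rw [g] at hg
          simpa using hg
        refine ⟨0 :: cs', ?_, ?_, ?_⟩
        · rw [hfil, List.countP_cons]
          simp [hb]
          simp only [List.length_cons] at hlen
          omega
        · rw [List.sum_cons, List.count_cons_of_ne (by omega)]
          simpa using hsum
        · rw [hfil]
          show List.replicate 0 t ++ ins t k cs'
              (x :: (xs.filter fun y => decide (y < t))) = x :: xs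
          rw [List.replicate_zero, List.nil_append, ins_cons, if_neg hb, hxs]

lemma chain'_filter_lt (t k : ℕ) : ∀ (l : List ℕ), l.Chain' (fun x y => y ≤ x + k) →
    (∀ x ∈ l, x = t ∨ x < t) →
    (l.filter (fun x => decide (x < t))).Chain' (fun x y => y ≤ x + k)
  | [], _, _ => List.isChain_nil
  | x :: xs, hch, helt => by
    have hch' := List.isChain_cons.mp hch
    have helt' : ∀ y ∈ xs, y = t ∨ y < t := fun y hy => helt y (List.mem_cons_of_mem x hy)
    have ih := chain'_filter_lt t k xs hch'.2 helt'
    rcases helt x (List.mem_cons_self) with hx | hx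
    · rw [List.filter_cons, if_neg (by simp [hx])]
      exact ih
    · rw [List.filter_cons, if_pos (by simpa using hx)]
      apply List.isChain_cons.mpr
      refine ⟨?_, ih⟩
      intro y hy
      have hyf := List.mem_of_mem_head? hy
      have hylt : y < t := by
        have := List.of_mem_filter hyf
        simpa using this
      cases xs with
      | nil => simp at hyf
      | cons z zs =>
        rcases helt' z (List.mem_cons_self) with hz | hz
        · have h1 : z ≤ x + k := hch'.1 z rfl
          omega
        · have hfc : (z :: zs).filter (fun x => decide (x < t)) =
              z :: zs.filter (fun x => decide (x < t)) := by
            rw [List.filter_cons, if_pos (by simpa using hz)]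
          rw [hfc, List.head?_cons, Option.mem_some_iff] at hy
          have h1 : z ≤ x + k := hch'.1 z rfl
          omega

/-! ### Counting weak compositions -/

lemma sum_zero_all_zero : ∀ (l : List ℕ), l.sum = 0 → l = List.replicate l.length 0
  | [], _ => rfl
  | x :: xs, h => by
    rw [List.sum_cons] at h
    have hx : x = 0 := by omega
    have hxs : xs.sum = 0 := by omega
    rw [List.length_cons, List.replicate_succ, hx]
    exact congrArg (0 :: ·) (sum_zero_all_zero xs hxs)

lemma finiteW : ∀ (n m : ℕ), {cs : List ℕ | cs.length = n ∧ cs.sum ≤ m}.Finite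
  | 0, m => Set.Finite.subset (Set.finite_singleton []) (by
      intro cs hcs
      rw [Set.mem_setOf_eq, List.length_eq_zero_iff] at hcs
      simp [hcs.1])
  | n + 1, m => by
    apply Set.Finite.subset (((Set.finite_Iic m).prod (finiteW n m)).image
      (fun p : ℕ × List ℕ => p.1 :: p.2))
    intro cs hcs
    obtain ⟨hlen, hsum⟩ := hcs
    obtain ⟨c, cs', rfl⟩ : ∃ c cs', cs = c :: cs' := by
      cases cs with
      | nil => simp at hlen
      | cons c cs' => exact ⟨c, cs', rfl⟩
    rw [List.sum_cons] at hsum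
    exact ⟨(c, cs'), ⟨by simp; omega, by simp at hlen ⊢; omega⟩, rfl⟩

lemma finiteWeq (n m : ℕ) : {cs : List ℕ | cs.length = n ∧ cs.sum = m}.Finite :=
  (finiteW n m).subset (fun cs hcs => ⟨hcs.1, le_of_eq hcs.2⟩)

lemma countW : ∀ (n m : ℕ), {cs : List ℕ | cs.length = n + 1 ∧ cs.sum = m}.ncard
    = (n + m).choose m
  | 0, m => by
    have hset : {cs : List ℕ | cs.length = 0 + 1 ∧ cs.sum = m} = {[m]} := by
      ext cs
      simp only [Set.mem_setOf_eq, Set.mem_singleton_iff]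
      constructor
      · rintro ⟨h1, h2⟩
        obtain ⟨c, cs', rfl⟩ : ∃ c cs', cs = c :: cs' := by
          cases cs with
          | nil => simp at h1
          | cons c cs' => exact ⟨c, cs', rfl⟩
        have h1' : cs' = [] := by simpa using h1
        subst h1'
        have h2' : c = m := by simpa using h2
        rw [h2']
      · rintro rfl
        simp
    rw [hset, Set.ncard_singleton, Nat.zero_add, Nat.choose_self]
  | n + 1, 0 => by
    have hset : {cs : List ℕ | cs.length = n + 1 + 1 ∧ cs.sum = 0} =
        {List.replicate (n + 2) 0} := by
      ext cs
      simp only [Set.mem_setOf_eq, Set.mem_singleton_iff]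
      constructor
      · rintro ⟨h1, h2⟩
        have := sum_zero_all_zero cs h2
        rw [h1] at this
        exact this
      · rintro rfl
        simp
    rw [hset, Set.ncard_singleton, Nat.add_zero, Nat.choose_zero_right]
  | n + 1, m + 1 => by
    set E : Set (List ℕ) := {cs : List ℕ | cs.length = n + 1 + 1 ∧ cs.sum = m + 1} with hE
    set E0 : Set (List ℕ) := {cs ∈ E | cs.headI = 0} with hE0
    set E1 : Set (List ℕ) := {cs ∈ E | cs.headI ≠ 0} with hE1
    have hunion : E = E0 ∪ E1 := by
      ext cs; simp only [hE0, hE1, Set.mem_union, Set.mem_setOf_eq]; tauto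
    have hdisj : Disjoint E0 E1 := by
      rw [Set.disjoint_iff_inter_eq_empty]
      ext cs
      simp only [hE0, hE1, Set.mem_inter_iff, Set.mem_setOf_eq, Set.mem_empty_iff_false]
      tauto
    have hfin : E.Finite := finiteWeq _ _
    have hE0card : E0.ncard = (n + (m + 1)).choose (m + 1) := by
      have himg : E0 = (fun cs => 0 :: cs) ''
          {cs : List ℕ | cs.length = n + 1 ∧ cs.sum = m + 1} := by
        ext cs
        simp only [hE0, hE, Set.mem_setOf_eq, Set.mem_image]
        constructor
        · rintro ⟨⟨h1, h2⟩, h3⟩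
          obtain ⟨c, cs', rfl⟩ : ∃ c cs', cs = c :: cs' := by
            cases cs with
            | nil => simp at h1
            | cons c cs' => exact ⟨c, cs', rfl⟩
          simp only [List.headI_cons] at h3
          subst h3
          exact ⟨cs', ⟨by simpa using h1, by simpa using h2⟩, rfl⟩
        · rintro ⟨cs', ⟨h1, h2⟩, rfl⟩
          exact ⟨⟨by simp [h1], by simp [h2]⟩, rfl⟩
      rw [himg, Set.ncard_image_of_injOn (fun a _ b _ h => by simpa using h),
        countW n (m + 1)]
    have hE1card : E1.ncard = (n + 1 + m).choose m := by
      have himg : E1 = (fun cs : List ℕ => (cs.headI + 1) :: cs.tail) ''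
          {cs : List ℕ | cs.length = n + 1 + 1 ∧ cs.sum = m} := by
        ext cs
        simp only [hE1, hE, Set.mem_setOf_eq, Set.mem_image]
        constructor
        · rintro ⟨⟨h1, h2⟩, h3⟩
          obtain ⟨c, cs', rfl⟩ : ∃ c cs', cs = c :: cs' := by
            cases cs with
            | nil => simp at h1
            | cons c cs' => exact ⟨c, cs', rfl⟩
          simp only [List.headI_cons] at h3
          obtain ⟨c', rfl⟩ : ∃ c', c = c' + 1 := ⟨c - 1, by omega⟩
          refine ⟨c' :: cs', ⟨by simpa using h1, ?_⟩, rfl⟩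
          simp only [List.sum_cons] at h2 ⊢
          omega
        · rintro ⟨cs', ⟨h1, h2⟩, rfl⟩
          have hne : cs' ≠ [] := by
            intro h; rw [h] at h1; simp at h1
          refine ⟨⟨?_, ?_⟩, by simp⟩
          · simp only [List.length_cons, List.length_tail]
            omega
          · rw [List.sum_cons]
            have := sum_headI_tail hne
            omega
      rw [himg, Set.ncard_image_of_injOn, countW (n + 1) m]
      intro a ha b hb h
      simp only [Set.mem_setOf_eq] at ha hb
      simp only [List.cons.injEq] at h
      have hane : a ≠ [] := by
        intro hh; rw [hh] at ha; simp at ha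
      have hbne : b ≠ [] := by
        intro hh; rw [hh] at hb; simp at hb
      rw [← headI_cons_tail hane, ← headI_cons_tail hbne, h.2]
      congr 1
      omega
    rw [hunion, Set.ncard_union_eq hdisj (hfin.subset (fun cs h => h.1))
      (hfin.subset (fun cs h => h.1)), hE0card, hE1card]
    have h3 : n + (m + 1) = n + 1 + m := by omega
    rw [h3]
    have h4 : n + 1 + (m + 1) = (n + 1 + m) + 1 := by omega
    rw [h4, Nat.choose_succ_succ]
    simp only [Nat.succ_eq_add_one]
    omega
termination_by n m => (n, m)

/-! ### The insertion lemma -/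

lemma insert_max (k t m : ℕ) (s : Multiset ℕ) (hs : ∀ x ∈ s, x < t) :
    {l : List ℕ | (↑l : Multiset ℕ) = s + Multiset.replicate m t ∧
      l.Chain' fun x y => y ≤ x + k}.ncard =
    {l : List ℕ | (↑l : Multiset ℕ) = s ∧ l.Chain' fun x y => y ≤ x + k}.ncard *
      (Multiset.countP (fun x => t ≤ x + k) s + m).choose m := by
  set S := Multiset.countP (fun x => t ≤ x + k) s with hS
  set A := {l : List ℕ | (↑l : Multiset ℕ) = s + Multiset.replicate m t ∧
    l.Chain' fun x y => y ≤ x + k} with hA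
  set B := {l : List ℕ | (↑l : Multiset ℕ) = s ∧ l.Chain' fun x y => y ≤ x + k} with hB
  set C := {cs : List ℕ | cs.length = S + 1 ∧ cs.sum = m} with hC
  have hcount : ∀ l' : List ℕ, (↑l' : Multiset ℕ) = s →
      l'.countP (fun x => decide (t ≤ x + k)) = S := by
    intro l' hl'
    rw [hS, ← hl', Multiset.coe_countP]
  have hbij : Set.BijOn (g t k) (B ×ˢ C) A := by
    refine ⟨?_, ?_, ?_⟩
    · rintro ⟨l', cs⟩ hmem
      obtain ⟨⟨hl', hch⟩, hlen, hsum⟩ := hmem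
      dsimp only at hl' hch hlen hsum
      have hlelt : ∀ x ∈ l', x < t := by
        intro x hx
        exact hs x (by rw [← hl']; exact Multiset.mem_coe.mpr hx)
      have hcsne : cs ≠ [] := by
        intro h; rw [h] at hlen; simp at hlen
      have htail : cs.tail.length = l'.countP (fun x => decide (t ≤ x + k)) := by
        rw [hcount l' hl']
        rw [← headI_cons_tail hcsne, List.length_cons] at hlen
        omega
      have hm : cs.headI + cs.tail.sum = m := by rw [sum_headI_tail hcsne, hsum]
      constructor
      · show (↑(g t k (l', cs)) : Multiset ℕ) = s + Multiset.replicate m t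
        rw [g]
        dsimp only
        rw [← Multiset.coe_add, Multiset.coe_replicate, coe_ins t k l' cs.tail htail, hl']
        calc Multiset.replicate cs.headI t + (s + Multiset.replicate cs.tail.sum t)
            = s + Multiset.replicate (cs.headI + cs.tail.sum) t := by
              rw [Multiset.replicate_add]; abel
          _ = s + Multiset.replicate m t := by rw [hm]
      · show (g t k (l', cs)).Chain' fun x y => y ≤ x + k
        exact chain'_ins t k l' hch hlelt cs.tail cs.headI
    · rintro ⟨l1, cs1⟩ hmem1 ⟨l2, cs2⟩ hmem2 heq
      obtain ⟨⟨hl1, hch1⟩, hlen1, hsum1⟩ := hmem1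
      obtain ⟨⟨hl2, hch2⟩, hlen2, hsum2⟩ := hmem2
      dsimp only at hl1 hch1 hlen1 hsum1 hl2 hch2 hlen2 hsum2
      have helt1 : ∀ x ∈ l1, x < t := fun x hx => hs x (by rw [← hl1]; exact hx)
      have helt2 : ∀ x ∈ l2, x < t := fun x hx => hs x (by rw [← hl2]; exact hx)
      have hll : l1 = l2 := by
        rw [← filter_g t k l1 cs1 helt1, ← filter_g t k l2 cs2 helt2, heq]
      subst hll
      have hcs1ne : cs1 ≠ [] := by intro h; rw [h] at hlen1; simp at hlen1
      have hcs2ne : cs2 ≠ [] := by intro h; rw [h] at hlen2; simp at hlen2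
      rw [g, g] at heq
      dsimp only at heq
      obtain ⟨hhead, htail⟩ := rep_cancel t cs1.headI cs2.headI _ _
        (head?_ins_ne_t t k cs1.tail l1 helt1) (head?_ins_ne_t t k cs2.tail l1 helt1) heq
      have ht1 : cs1.tail.length = l1.countP (fun x => decide (t ≤ x + k)) := by
        rw [hcount l1 hl1]
        rw [← headI_cons_tail hcs1ne, List.length_cons] at hlen1
        omega
      have ht2 : cs2.tail.length = l1.countP (fun x => decide (t ≤ x + k)) := by
        rw [hcount l1 hl2]
        rw [← headI_cons_tail hcs2ne, List.length_cons] at hlen2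
        omega
      have htl := ins_inj t k l1 cs1.tail cs2.tail helt1 ht1 ht2 htail
      have e1 := headI_cons_tail hcs1ne
      have e2 := headI_cons_tail hcs2ne
      have hcs : cs1 = cs2 := by rw [← e1, ← e2, hhead, htl]
      rw [hcs]
    · rintro l ⟨hl, hch⟩
      have helt : ∀ x ∈ l, x = t ∨ x < t := by
        intro x hx
        have hx' : x ∈ s + Multiset.replicate m t := by
          rw [← hl]; exact Multiset.mem_coe.mpr hx
        rcases Multiset.mem_add.mp hx' with h | h
        · exact Or.inr (hs x h)
        · exact Or.inl (Multiset.eq_of_mem_replicate h)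
      obtain ⟨cs, hlen, hsum, hg⟩ := g_surj t k l hch helt
      have hfilm : (↑(l.filter (fun x => decide (x < t))) : Multiset ℕ) = s := by
        have hq : (↑(l.filter (fun x => decide (x < t))) : Multiset ℕ) =
            Multiset.filter (fun x => x < t) ↑l := by
          rw [Multiset.filter_coe]
        rw [hq, hl, Multiset.filter_add]
        have h1 : Multiset.filter (fun x => x < t) s = s :=
          Multiset.filter_eq_self.mpr hs
        have h2 : Multiset.filter (fun x => x < t) (Multiset.replicate m t) = 0 := by
          rw [Multiset.filter_eq_nil]
          intro a ha
          rw [Multiset.eq_of_mem_replicate ha]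
          omega
        rw [h1, h2, add_zero]
      refine ⟨(l.filter (fun x => decide (x < t)), cs), ⟨⟨hfilm, ?_⟩, ?_, ?_⟩, hg⟩
      · exact chain'_filter_lt t k l hch helt
      · show cs.length = S + 1
        rw [hlen, hcount _ hfilm]
      · show cs.sum = m
        rw [hsum]
        have hq : l.count t = Multiset.count t ↑l := by rw [Multiset.coe_count]
        rw [hq, hl, Multiset.count_add, Multiset.count_replicate_self]
        have hz : Multiset.count t s = 0 := by
          rw [Multiset.count_eq_zero]
          intro h
          exact absurd (hs t h) (lt_irrefl t)
        omega
  have h1 : A.ncard = (B ×ˢ C).ncard := by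
    rw [← hbij.image_eq, Set.ncard_image_of_injOn hbij.injOn]
  have h2 : (B ×ˢ C).ncard = B.ncard * C.ncard := by
    rw [← Nat.card_coe_set_eq, ← Nat.card_coe_set_eq, ← Nat.card_coe_set_eq,
      Nat.card_congr (Equiv.Set.prod B C), Nat.card_prod]
  rw [h1, h2, hC, countW S m]

end VN

/-- Proposition 10: the number of k-vn-arrangements of the multiset
`M = {0^{(b_0)}, 1^{(b_1)}, …, t^{(b_t)}}`, i.e. sequences listing the elements of `M` with
`v_{i+1} - v_i ≤ k` throughout, equals the multinomial coefficient of `b_0, …, b_{min(t,k)}`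
times `∏_{i=1}^{t-k} C(b_i + b_{i+1} + … + b_{i+k}, b_{i+k})` (empty products are `1`). -/
theorem card_k_vn_arrangements (t k : ℕ) (b : ℕ → ℕ) :
    {l : List ℕ | (↑l : Multiset ℕ) = (∑ i ∈ Finset.range (t + 1), Multiset.replicate (b i) i) ∧
        l.Chain' fun x y => y ≤ x + k}.ncard =
      Nat.multinomial (Finset.range (min t k + 1)) b *
        ∏ i ∈ Finset.Icc 1 (t - k),
          Nat.choose (∑ j ∈ Finset.Icc i (i + k), b j) (b (i + k)) := by
  induction t with
  | zero =>
    have hset : {l : List ℕ | (↑l : Multiset ℕ) =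
        (∑ i ∈ Finset.range (0 + 1), Multiset.replicate (b i) i) ∧
        l.Chain' fun x y => y ≤ x + k} = {List.replicate (b 0) 0} := by
      ext l
      simp only [Set.mem_setOf_eq, Set.mem_singleton_iff, zero_add, Finset.range_one,
        Finset.sum_singleton]
      constructor
      · rintro ⟨h1, _⟩
        rw [← Multiset.coe_replicate, Multiset.coe_eq_coe, List.perm_replicate] at h1
        exact h1
      · rintro rfl
        refine ⟨by rw [Multiset.coe_replicate], ?_⟩
        exact List.isChain_replicate_of_rel _ (Nat.le_add_right 0 k)
    rw [hset, Set.ncard_singleton]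
    rw [Nat.zero_sub, Finset.Icc_eq_empty (by omega), Finset.prod_empty]
    rw [Nat.zero_min, Nat.zero_add, Finset.range_one]
    simp
  | succ t ih =>
    have hsum : (∑ i ∈ Finset.range (t + 1 + 1), Multiset.replicate (b i) i) =
        (∑ i ∈ Finset.range (t + 1), Multiset.replicate (b i) i) +
          Multiset.replicate (b (t + 1)) (t + 1) := Finset.sum_range_succ _ _
    set s : Multiset ℕ := ∑ i ∈ Finset.range (t + 1), Multiset.replicate (b i) i with hs
    have hselt : ∀ x ∈ s, x < t + 1 := by
      intro x hx
      rw [hs, Multiset.mem_sum] at hx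
      obtain ⟨i, hi, hxi⟩ := hx
      rw [Multiset.eq_of_mem_replicate hxi]
      exact Finset.mem_range.mp hi
    rw [hsum, VN.insert_max k (t + 1) (b (t + 1)) s hselt, ih]
    have hrep : ∀ i n : ℕ, Multiset.countP (fun x => t + 1 ≤ x + k) (Multiset.replicate n i)
        = if t + 1 ≤ i + k then n else 0 := by
      intro i n
      induction n with
      | zero => simp
      | succ n ihn =>
        rw [Multiset.replicate_succ, Multiset.countP_cons, ihn]
        by_cases h : t + 1 ≤ i + k <;> simp [h]
    have hScount : Multiset.countP (fun x => t + 1 ≤ x + k) s =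
        ∑ i ∈ (Finset.range (t + 1)).filter (fun i => t + 1 ≤ i + k), b i := by
      rw [hs, ← Multiset.coe_countPAddMonoidHom, map_sum, Finset.sum_filter]
      apply Finset.sum_congr rfl
      intro i _
      simp only [Multiset.coe_countPAddMonoidHom]
      exact hrep i (b i)
    rcases le_or_gt (t + 1) k with hk | hk
    · -- t + 1 ≤ k : multinomial absorbs the new factor
      have hfil : (Finset.range (t + 1)).filter (fun i => t + 1 ≤ i + k) =
          Finset.range (t + 1) := by
        apply Finset.filter_true_of_mem
        intro i _
        omega
      have hmin1 : min (t + 1) k = t + 1 := by omega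
      have hmin2 : min t k = t := by omega
      have hsub1 : t + 1 - k = 0 := by omega
      have hsub2 : t - k = 0 := by omega
      rw [hmin1, hmin2, hsub1, hsub2, hScount, hfil]
      rw [Finset.Icc_eq_empty (by omega), Finset.prod_empty]
      have hins : Finset.range (t + 1 + 1) = insert (t + 1) (Finset.range (t + 1)) :=
        Finset.range_add_one
      rw [hins, Nat.multinomial_insert (by simp), add_comm (b (t + 1))]
      ring
    · -- k ≤ t
      have hfil : (Finset.range (t + 1)).filter (fun i => t + 1 ≤ i + k) =
          Finset.Icc (t + 1 - k) t := by
        ext i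
        simp only [Finset.mem_filter, Finset.mem_range, Finset.mem_Icc]
        omega
      have hmin1 : min (t + 1) k = k := by omega
      have hmin2 : min t k = k := by omega
      rw [hmin1, hmin2, hScount, hfil]
      have hsub : t + 1 - k = (t - k) + 1 := by omega
      rw [hsub, Finset.prod_Icc_succ_top (by omega)]
      have harg : t - k + 1 + k = t + 1 := by omega
      rw [harg]
      have hsum2 : ∑ j ∈ Finset.Icc (t - k + 1) (t + 1), b j =
          (∑ i ∈ Finset.Icc (t - k + 1) t, b i) + b (t + 1) :=
        Finset.sum_Icc_succ_top (by omega) _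
      rw [hsum2]
      ring
end
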